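/- arXiv:2501.07400 — 7 statements merged into one kernel-verified Lean document; each statement's English description precedes it below -/
import Mathlib

section
/- If D ∈ ℝ^{Q×Q} is a diagonal matrix with strictly positive diagonal entries and R ∈ ℝ^{Q×Q} is invertible, then for all β, x ∈ ℝ^Q one has τ_{DR,β}(x) = τ_{R,β}(x); that is, the truncation map is independent of a positive diagonal factor of the weight matrix. -/
noncomputable section

open scoped Matrix

/-- Componentwise ReLU on `ℝ^Q`. -/
def relu {Q : ℕ} (v : Fin Q → ℝ) : Fin Q → ℝ := fun r => max (v r) 0

/-- The truncation map `τ_{W,β}(x) = W⁻¹ σ(W(x+β)) - β`. -/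
def trunc {Q : ℕ} (W : Matrix (Fin Q) (Fin Q) ℝ) (β x : Fin Q → ℝ) : Fin Q → ℝ :=
  W⁻¹.mulVec (relu (W.mulVec (x + β))) - β

/-- the truncation map is independent of a strictly positive diagonal
factor of the weight matrix: `τ_{DR,β} = τ_{R,β}`. -/
theorem trunc_diagonal_invariance {Q : ℕ} (hQ : 1 ≤ Q)
    (d : Fin Q → ℝ) (hd : ∀ i, 0 < d i)
    (R : Matrix (Fin Q) (Fin Q) ℝ) (hR : IsUnit R.det)
    (β x : Fin Q → ℝ) :
    trunc (Matrix.diagonal d * R) β x = trunc R β x := by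
  unfold trunc
  have hrelu : relu ((Matrix.diagonal d * R).mulVec (x + β)) =
      (Matrix.diagonal d).mulVec (relu (R.mulVec (x + β))) := by
    funext i
    simp only [relu, ← Matrix.mulVec_mulVec, Matrix.mulVec_diagonal]
    rw [mul_max_of_nonneg _ _ (hd i).le, mul_zero]
  rw [hrelu, Matrix.mul_inv_rev, Matrix.mulVec_mulVec, mul_assoc,
    Matrix.nonsing_inv_mul _ (by simpa [Matrix.det_diagonal] using isUnit_iff_ne_zero.mpr <|
      Finset.prod_ne_zero_iff.mpr fun i _ => (hd i).ne'), mul_one]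
end
end

section
/- Let W ∈ ℝ^{Q×Q} be invertible and x, β₀ ∈ ℝ^Q, and assume the nondegeneracy condition (W(x+β₀))_r ≠ 0 for every coordinate r = 1,…,Q. Then the map β ↦ τ_{W,β}(x) from ℝ^Q to ℝ^Q is Fréchet differentiable at β₀, with derivative the linear map given by the matrix −W^{-1} H^⊥(W(x+β₀)) W. -/
noncomputable section

open scoped Matrix

/-- Heaviside function: `1` for `t > 0`, `0` for `t ≤ 0`. -/
def heav (t : ℝ) : ℝ := if 0 < t then 1 else 0

/-- The diagonal matrix `H(v)` with entries `h(v_r)`. -/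
def Hmat {Q : ℕ} (v : Fin Q → ℝ) : Matrix (Fin Q) (Fin Q) ℝ :=
  Matrix.diagonal fun r => heav (v r)

/-- `H^⊥(v) = 1 - H(v)`. -/
def Hperp {Q : ℕ} (v : Fin Q → ℝ) : Matrix (Fin Q) (Fin Q) ℝ := 1 - Hmat v

/-- under the nondegeneracy condition `(W(x+β₀))_r ≠ 0` for all `r`, the map
`β ↦ τ_{W,β}(x)` is Fréchet differentiable at `β₀` with derivative the linear map given by
the matrix `−W⁻¹ H^⊥(W(x+β₀)) W`. -/
theorem trunc_bias_derivative {Q : ℕ} (hQ : 1 ≤ Q)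
    (W : Matrix (Fin Q) (Fin Q) ℝ) (hW : IsUnit W.det)
    (x β₀ : Fin Q → ℝ)
    (hnd : ∀ r, W.mulVec (x + β₀) r ≠ 0) :
    HasFDerivAt (fun β : Fin Q → ℝ => trunc W β x)
      (LinearMap.toContinuousLinearMap
        (Matrix.mulVecLin (-(W⁻¹ * Hperp (W.mulVec (x + β₀)) * W)))) β₀ := by
  set v₀ := W.mulVec (x + β₀) with hv₀
  set A := W⁻¹ * Hmat v₀ * W with hA
  have hWinv : W⁻¹ * W = 1 := Matrix.nonsing_inv_mul W hW
  have hmat : -(W⁻¹ * Hperp v₀ * W) = A - 1 := by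
    rw [Hperp, Matrix.mul_sub, Matrix.sub_mul, Matrix.mul_one, hWinv, hA]
    abel
  rw [hmat]
  -- the affine model
  have hg : HasFDerivAt (fun β : Fin Q → ℝ => A.mulVec (x + β) - β)
      (LinearMap.toContinuousLinearMap (Matrix.mulVecLin (A - 1))) β₀ := by
    have heq : (fun β : Fin Q → ℝ => A.mulVec (x + β) - β)
        = fun β : Fin Q → ℝ => A.mulVec x + (A - 1).mulVec β := by
      funext β
      rw [Matrix.sub_mulVec, Matrix.one_mulVec, Matrix.mulVec_add]
      abel
    rw [heq]
    exact ((LinearMap.toContinuousLinearMap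
      (Matrix.mulVecLin (A - 1))).hasFDerivAt).const_add _
  refine hg.congr_of_eventuallyEq ?_
  -- eventual equality
  have hcont : Continuous fun β : Fin Q → ℝ => W.mulVec (x + β) := by
    exact (LinearMap.toContinuousLinearMap (Matrix.mulVecLin W)).continuous.comp
      (continuous_const.add continuous_id)
  have hev : ∀ᶠ β in nhds β₀, ∀ r,
      relu (W.mulVec (x + β)) r = (Hmat v₀).mulVec (W.mulVec (x + β)) r := by
    rw [Filter.eventually_all]
    intro r
    have hcr : Continuous fun β : Fin Q → ℝ => W.mulVec (x + β) r :=
      (continuous_apply r).comp hcont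
    rcases lt_or_gt_of_ne (hnd r) with hneg | hpos
    · have : ∀ᶠ β in nhds β₀, W.mulVec (x + β) r < 0 :=
        (hcr.continuousAt).eventually_lt continuousAt_const hneg
      filter_upwards [this] with β hβ
      simp [relu, Hmat, Matrix.mulVec_diagonal, heav, not_lt.mpr hneg.le, hβ.le,
        max_eq_right]
    · have : ∀ᶠ β in nhds β₀, 0 < W.mulVec (x + β) r :=
        (continuousAt_const).eventually_lt (hcr.continuousAt) hpos
      filter_upwards [this] with β hβ
      simp [relu, Hmat, Matrix.mulVec_diagonal, heav, hpos, hβ.le, max_eq_left]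
  filter_upwards [hev] with β hβ
  have : relu (W.mulVec (x + β)) = (Hmat v₀).mulVec (W.mulVec (x + β)) := funext hβ
  rw [trunc, this, Matrix.mulVec_mulVec, Matrix.mulVec_mulVec, hA]

end
end

section
/- Let N ≥ 1 and let x_1 < x_2 < ⋯ < x_N < y be real numbers, and fix s_1 ∈ ℝ. Define recursively s_{n+1} = s_n + (N/n)·log((y−x_n)/(y−x_{n+1})) for 1 ≤ n ≤ N−1, and define b : [s_1, ∞) → ℝ by b(s) = y − e^{−(n/N)(s−s_n)}(y−x_n) for s ∈ [s_n, s_{n+1}] (1 ≤ n ≤ N−1) and b(s) = y − e^{−(s−s_N)}(y−x_N) for s ≥ s_N. Then: (a) s_1 < s_2 < ⋯ < s_N, i.e. each successive truncation time is reached in finite time; (b) b is well defined, continuous and strictly increasing, with b(s_n) = x_n for each n and lim_{s→∞} b(s) = y; (c) for each 1 ≤ n ≤ N−1 and each s in the open interval (s_n, s_{n+1}), and likewise for each s ∈ (s_N, ∞), b is differentiable at s and satisfies the truncation gradient flow equation b'(s) = (1/N) · #{ i ∈ {1,…,N} : x_i ≤ b(s) } · (y − b(s)). -/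
open scoped Classical

lemma myContinuousOn_union_closed {f : ℝ → ℝ} {s t : Set ℝ}
    (hsc : IsClosed s) (htc : IsClosed t)
    (h1 : ContinuousOn f s) (h2 : ContinuousOn f t) :
    ContinuousOn f (s ∪ t) := by
  intro z hz
  have hs : ContinuousWithinAt f s z := by
    by_cases h : z ∈ s
    · exact h1 z h
    · exact continuousWithinAt_of_notMem_closure (by rwa [hsc.closure_eq])
  have ht : ContinuousWithinAt f t z := by
    by_cases h : z ∈ t
    · exact h2 z h
    · exact continuousWithinAt_of_notMem_closure (by rwa [htc.closure_eq])
  exact hs.union ht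

/-- the one-dimensional bias flow. With truncation times
`s_{n+1} = s_n + (N/n) log((y−x_n)/(y−x_{n+1}))` and the piecewise-exponential trajectory
`b`, the truncation times are strictly increasing, `b` is continuous, strictly increasing,
interpolates the data points `x_n` at the times `s_n` and converges to `y`, and on each open
interval `b` solves the truncation gradient flow equation
`b'(s) = (1/N)·#{i : x_i ≤ b(s)}·(y − b(s))`. -/
theorem one_dimensional_bias_flow (N : ℕ) (hN : 1 ≤ N)
    (x : ℕ → ℝ) (y : ℝ)
    (hx : ∀ n, 1 ≤ n → n < N → x n < x (n + 1)) (hxy : x N < y)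
    (s : ℕ → ℝ)
    (hs : ∀ n, 1 ≤ n → n < N →
      s (n + 1) = s n + ((N : ℝ) / n) * Real.log ((y - x n) / (y - x (n + 1))))
    (b : ℝ → ℝ)
    (hb1 : ∀ n, 1 ≤ n → n < N → ∀ t ∈ Set.Icc (s n) (s (n + 1)),
      b t = y - Real.exp (-((n : ℝ) / N) * (t - s n)) * (y - x n))
    (hb2 : ∀ t, s N ≤ t → b t = y - Real.exp (-(t - s N)) * (y - x N)) :
    -- (a) the truncation times are strictly increasing
    (∀ m n, 1 ≤ m → m < n → n ≤ N → s m < s n) ∧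
    -- (b) b is continuous, strictly increasing, b (s n) = x n, and b → y
    (ContinuousOn b (Set.Ici (s 1)) ∧ StrictMonoOn b (Set.Ici (s 1)) ∧
      (∀ n, 1 ≤ n → n ≤ N → b (s n) = x n) ∧
      Filter.Tendsto b Filter.atTop (nhds y)) ∧
    -- (c) b solves the truncation gradient flow equation between truncation times
    ((∀ n, 1 ≤ n → n < N → ∀ t ∈ Set.Ioo (s n) (s (n + 1)),
        HasDerivAt b
          ((N : ℝ)⁻¹ * (((Finset.Icc 1 N).filter fun i => x i ≤ b t).card : ℝ)
            * (y - b t)) t) ∧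
      (∀ t, s N < t →
        HasDerivAt b
          ((N : ℝ)⁻¹ * (((Finset.Icc 1 N).filter fun i => x i ≤ b t).card : ℝ)
            * (y - b t)) t)) := by
  have hNpos : (0:ℝ) < N := by exact_mod_cast hN
  -- monotonicity of the data
  have hxlt : ∀ m n, 1 ≤ m → m < n → n ≤ N → x m < x n := by
    intro m n hm
    induction n with
    | zero => intro h; omega
    | succ k ih =>
      intro hmk hkN
      rcases Nat.lt_or_ge m k with h | h
      · exact (ih h (by omega)).trans (hx k (by omega) (by omega))
      · have : m = k := by omega
        subst this
        exact hx m hm (by omega)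
  have hxle : ∀ m n, 1 ≤ m → m ≤ n → n ≤ N → x m ≤ x n := by
    intro m n hm hmn hnN
    rcases eq_or_lt_of_le hmn with h | h
    · rw [h]
    · exact (hxlt m n hm h hnN).le
  have hxy' : ∀ n, 1 ≤ n → n ≤ N → x n < y := by
    intro n h1 h2
    exact lt_of_le_of_lt (hxle n N h1 h2 le_rfl) hxy
  have hyx : ∀ n, 1 ≤ n → n ≤ N → 0 < y - x n := by
    intro n h1 h2
    exact sub_pos.2 (hxy' n h1 h2)
  -- (a)
  have hstep : ∀ n, 1 ≤ n → n < N → s n < s (n + 1) := by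
    intro n h1 h2
    rw [hs n h1 h2]
    have hn0 : (0:ℝ) < n := by exact_mod_cast h1
    have h3 : 0 < y - x (n + 1) := hyx (n + 1) (by omega) (by omega)
    have h4 : y - x (n + 1) < y - x n := by
      have := hx n h1 h2; linarith
    have hlog : 0 < Real.log ((y - x n) / (y - x (n + 1))) :=
      Real.log_pos ((one_lt_div h3).2 h4)
    have := mul_pos (div_pos hNpos hn0) hlog
    linarith
  have sa : ∀ m n, 1 ≤ m → m < n → n ≤ N → s m < s n := by
    intro m n hm
    induction n with
    | zero => intro h; omega
    | succ k ih =>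
      intro hmk hkN
      rcases Nat.lt_or_ge m k with h | h
      · exact (ih h (by omega)).trans (hstep k (by omega) (by omega))
      · have : m = k := by omega
        subst this
        exact hstep m hm (by omega)
  have hsle : ∀ n, 1 ≤ n → n ≤ N → s 1 ≤ s n := by
    intro n h1 h2
    rcases eq_or_lt_of_le h1 with h | h
    · rw [← h]
    · exact (sa 1 n le_rfl h h2).le
  -- values at truncation times
  have hval : ∀ n, 1 ≤ n → n ≤ N → b (s n) = x n := by
    intro n h1 h2
    rcases eq_or_lt_of_le h2 with h | h
    · subst h
      rw [hb2 (s n) le_rfl, sub_self, neg_zero, Real.exp_zero, one_mul]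
      ring
    · rw [hb1 n h1 h (s n) ⟨le_rfl, (hstep n h1 h).le⟩, sub_self, mul_zero,
        Real.exp_zero, one_mul]
      ring
  -- strict monotonicity on the pieces
  have hmonoP : ∀ n, 1 ≤ n → n < N → ∀ t1 ∈ Set.Icc (s n) (s (n + 1)),
      ∀ t2 ∈ Set.Icc (s n) (s (n + 1)), t1 < t2 → b t1 < b t2 := by
    intro n h1 h2 t1 ht1 t2 ht2 h12
    rw [hb1 n h1 h2 t1 ht1, hb1 n h1 h2 t2 ht2]
    have hc : 0 < y - x n := hyx n h1 h2.le
    have hnn : (0:ℝ) < n := by exact_mod_cast h1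
    have hpos : 0 < (n:ℝ) / N := div_pos hnn hNpos
    have hexp : Real.exp (-((n:ℝ) / N) * (t2 - s n)) <
        Real.exp (-((n:ℝ) / N) * (t1 - s n)) := by
      apply Real.exp_lt_exp.2
      nlinarith
    nlinarith
  have hmonoT : ∀ t1, s N ≤ t1 → ∀ t2, s N ≤ t2 → t1 < t2 → b t1 < b t2 := by
    intro t1 ht1 t2 ht2 h12
    rw [hb2 t1 ht1, hb2 t2 ht2]
    have hc : 0 < y - x N := hyx N hN le_rfl
    have hexp : Real.exp (-(t2 - s N)) < Real.exp (-(t1 - s N)) := by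
      apply Real.exp_lt_exp.2
      linarith
    nlinarith
  -- gluing: continuity and strict monotonicity on `Ici (s (N - k))`
  have hglue : ∀ k, k ≤ N - 1 → ContinuousOn b (Set.Ici (s (N - k))) ∧
      (∀ t1 ∈ Set.Ici (s (N - k)), ∀ t2 ∈ Set.Ici (s (N - k)), t1 < t2 → b t1 < b t2) := by
    intro k
    induction k with
    | zero =>
      intro _
      simp only [Nat.sub_zero]
      constructor
      · have hcont : Continuous (fun t : ℝ => y - Real.exp (-(t - s N)) * (y - x N)) := by
          fun_prop
        exact hcont.continuousOn.congr (fun t ht => hb2 t ht)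
      · intro t1 ht1 t2 ht2 h
        exact hmonoT t1 ht1 t2 ht2 h
    | succ k ih =>
      intro hk
      obtain ⟨ihc, ihm⟩ := ih (by omega)
      set n := N - (k + 1) with hn
      have hn1 : 1 ≤ n := by omega
      have hnN : n < N := by omega
      have hsucc : n + 1 = N - k := by omega
      rw [← hsucc] at ihc ihm
      have hIci : Set.Ici (s n) = Set.Icc (s n) (s (n + 1)) ∪ Set.Ici (s (n + 1)) := by
        rw [Set.Icc_union_Ici_eq_Ici (hstep n hn1 hnN).le]
      constructor
      · rw [hIci]
        apply myContinuousOn_union_closed isClosed_Icc isClosed_Ici _ ihc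
        have hcont : Continuous
            (fun t : ℝ => y - Real.exp (-((n:ℝ) / N) * (t - s n)) * (y - x n)) := by
          fun_prop
        exact hcont.continuousOn.congr (fun t ht => hb1 n hn1 hnN t ht)
      · intro t1 ht1 t2 ht2 h12
        by_cases h2 : t2 ≤ s (n + 1)
        · exact hmonoP n hn1 hnN t1 ⟨ht1, by linarith⟩ t2 ⟨ht2, h2⟩ h12
        · push_neg at h2
          by_cases h1 : s (n + 1) ≤ t1
          · exact ihm t1 h1 t2 h2.le h12
          · push_neg at h1
            have hbb : b t1 < b (s (n + 1)) :=
              hmonoP n hn1 hnN t1 ⟨ht1, h1.le⟩ (s (n + 1))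
                ⟨(hstep n hn1 hnN).le, le_rfl⟩ h1
            exact hbb.trans (ihm (s (n + 1)) Set.self_mem_Ici t2 h2.le h2)
  have hmain := hglue (N - 1) le_rfl
  have hNN : N - (N - 1) = 1 := by omega
  rw [hNN] at hmain
  have hsm : ∀ t1 ∈ Set.Ici (s 1), ∀ t2 ∈ Set.Ici (s 1), t1 < t2 → b t1 < b t2 := hmain.2
  -- convergence
  have htend : Filter.Tendsto b Filter.atTop (nhds y) := by
    have h2 : Filter.Tendsto (fun t : ℝ => Real.exp (-(t - s N))) Filter.atTop (nhds 0) := by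
      apply Real.tendsto_exp_atBot.comp
      have : Filter.Tendsto (fun t : ℝ => t - s N) Filter.atTop Filter.atTop :=
        Filter.tendsto_atTop_add_const_right _ _ Filter.tendsto_id
      exact Filter.tendsto_neg_atBot_iff.mpr this
    have h1 : Filter.Tendsto (fun t : ℝ => y - Real.exp (-(t - s N)) * (y - x N))
        Filter.atTop (nhds y) := by
      have := (h2.mul_const (y - x N)).const_sub y
      simpa using this
    apply h1.congr'
    filter_upwards [Filter.Ici_mem_atTop (s N)] with t ht
    exact (hb2 t ht).symm
  -- derivative on the interior pieces
  have hc1 : ∀ n, 1 ≤ n → n < N → ∀ t ∈ Set.Ioo (s n) (s (n + 1)),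
      HasDerivAt b
        ((N : ℝ)⁻¹ * (((Finset.Icc 1 N).filter fun i => x i ≤ b t).card : ℝ)
          * (y - b t)) t := by
    intro n h1 h2 t ht
    have hc : 0 < y - x n := hyx n h1 h2.le
    have hlb : x n < b t := by
      rw [← hval n h1 h2.le]
      exact hsm (s n) (hsle n h1 h2.le) t (le_trans (hsle n h1 h2.le) ht.1.le) ht.1
    have hub : b t < x (n + 1) := by
      rw [← hval (n + 1) (by omega) (by omega)]
      exact hsm t (le_trans (hsle n h1 h2.le) ht.1.le)
        (s (n + 1)) (hsle (n + 1) (by omega) (by omega)) ht.2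
    have hset : ((Finset.Icc 1 N).filter fun i => x i ≤ b t) = Finset.Icc 1 n := by
      ext i
      simp only [Finset.mem_filter, Finset.mem_Icc]
      constructor
      · rintro ⟨⟨hi1, hiN⟩, hile⟩
        refine ⟨hi1, ?_⟩
        by_contra hcon
        push_neg at hcon
        have : x (n + 1) ≤ x i := hxle (n + 1) i (by omega) (by omega) hiN
        linarith
      · rintro ⟨hi1, hin⟩
        exact ⟨⟨hi1, by omega⟩, le_trans (hxle i n hi1 hin (by omega)) hlb.le⟩
    have hcount : (((Finset.Icc 1 N).filter fun i => x i ≤ b t).card) = n := by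
      rw [hset, Nat.card_Icc]; omega
    have h0 : HasDerivAt (fun u : ℝ => -((n:ℝ) / N) * (u - s n)) (-((n:ℝ) / N)) t := by
      simpa using ((hasDerivAt_id t).sub_const (s n)).const_mul (-((n:ℝ) / N))
    have hEd : HasDerivAt (fun u => y - Real.exp (-((n:ℝ) / N) * (u - s n)) * (y - x n))
        (((n:ℝ) / N) * (Real.exp (-((n:ℝ) / N) * (t - s n)) * (y - x n))) t := by
      have hd := (h0.exp.mul_const (y - x n)).const_sub y
      convert hd using 1
      · rfl
      · rfl
      · ring
    have hfinal : HasDerivAt b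
        (((n:ℝ) / N) * (Real.exp (-((n:ℝ) / N) * (t - s n)) * (y - x n))) t := by
      apply hEd.congr_of_eventuallyEq
      filter_upwards [Ioo_mem_nhds ht.1 ht.2] with u hu
      exact hb1 n h1 h2 u (Set.Ioo_subset_Icc_self hu)
    have heq : ((N : ℝ)⁻¹ * (((Finset.Icc 1 N).filter fun i => x i ≤ b t).card : ℝ)
        * (y - b t)) =
        ((n:ℝ) / N) * (Real.exp (-((n:ℝ) / N) * (t - s n)) * (y - x n)) := by
      rw [hcount, hb1 n h1 h2 t (Set.Ioo_subset_Icc_self ht)]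
      ring
    rw [heq]
    exact hfinal
  -- derivative on the tail
  have hc2 : ∀ t, s N < t →
      HasDerivAt b
        ((N : ℝ)⁻¹ * (((Finset.Icc 1 N).filter fun i => x i ≤ b t).card : ℝ)
          * (y - b t)) t := by
    intro t ht
    have hc : 0 < y - x N := hyx N hN le_rfl
    have hlb : x N < b t := by
      rw [← hval N hN le_rfl]
      exact hsm (s N) (hsle N hN le_rfl) t (le_trans (hsle N hN le_rfl) ht.le) ht
    have hset : ((Finset.Icc 1 N).filter fun i => x i ≤ b t) = Finset.Icc 1 N := by
      apply Finset.filter_true_of_mem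
      intro i hi
      rw [Finset.mem_Icc] at hi
      exact le_trans (hxle i N hi.1 hi.2 le_rfl) hlb.le
    have hcount : (((Finset.Icc 1 N).filter fun i => x i ≤ b t).card) = N := by
      rw [hset, Nat.card_Icc]; omega
    have h0 : HasDerivAt (fun u : ℝ => -(u - s N)) (-1 : ℝ) t := by
      exact ((hasDerivAt_id t).sub_const (s N)).neg
    have hEd : HasDerivAt (fun u => y - Real.exp (-(u - s N)) * (y - x N))
        (Real.exp (-(t - s N)) * (y - x N)) t := by
      have hd := (h0.exp.mul_const (y - x N)).const_sub y
      convert hd using 1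
      · rfl
      · rfl
      · ring
    have hfinal : HasDerivAt b (Real.exp (-(t - s N)) * (y - x N)) t := by
      apply hEd.congr_of_eventuallyEq
      filter_upwards [Ioi_mem_nhds ht] with u hu
      exact hb2 u (le_of_lt hu)
    have heq : ((N : ℝ)⁻¹ * (((Finset.Icc 1 N).filter fun i => x i ≤ b t).card : ℝ)
        * (y - b t)) = Real.exp (-(t - s N)) * (y - x N) := by
      rw [hcount, hb2 t ht.le]
      field_simp
      ring
    rw [heq]
    exact hfinal
  exact ⟨sa, ⟨hmain.1, fun t1 ht1 t2 ht2 h => hsm t1 ht1 t2 ht2 h, hval, htend⟩, hc1, hc2⟩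
end

section
/- Let L ≥ 1, let R_1,…,R_L ∈ O(Q) and β^{(1)},…,β^{(L)} ∈ ℝ^Q, and fix x ∈ ℝ^Q. Define τ^{(ℓ)} = τ_{R_ℓ, β^{(ℓ)}}, the compositions τ^{(ℓ,1)} = τ^{(ℓ)} ∘ ⋯ ∘ τ^{(1)} with τ^{(0,1)} = identity, the diagonal matrices H^{(ℓ)} = H( R_ℓ( τ^{(ℓ−1,1)}(x) + β^{(ℓ)} ) ) and H^{(ℓ)⊥} = 1 − H^{(ℓ)}, and the products P⁺ = (R_L^T H^{(L)} R_L)(R_{L−1}^T H^{(L−1)} R_{L−1}) ⋯ (R_1^T H^{(1)} R_1) and, for 1 ≤ ℓ ≤ L, P⁻_ℓ = (R_L^T H^{(L)} R_L) ⋯ (R_{ℓ+1}^T H^{(ℓ+1)} R_{ℓ+1}) (R_ℓ^T H^{(ℓ)⊥} R_ℓ), with P⁻_L = R_L^T H^{(L)⊥} R_L. Then τ^{(L,1)}(x) = P⁺ x − Σ_{ℓ=1}^L P⁻_ℓ β^{(ℓ)}. -/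
noncomputable section

open scoped Matrix

/-- The truncation map for an orthogonal weight: `τ_{R,β}(x) = Rᵀ σ(R(x+β)) − β`. -/
def truncO {Q : ℕ} (R : Matrix (Fin Q) (Fin Q) ℝ) (β x : Fin Q → ℝ) : Fin Q → ℝ :=
  Rᵀ.mulVec (relu (R.mulVec (x + β))) - β

/-- `iterTrunc R β n = τ^{(n,1)} = τ^{(n)} ∘ ⋯ ∘ τ^{(1)}`, with `iterTrunc R β 0 = id`. -/
def iterTrunc {Q : ℕ} (R : ℕ → Matrix (Fin Q) (Fin Q) ℝ) (β : ℕ → Fin Q → ℝ) :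
    ℕ → (Fin Q → ℝ) → Fin Q → ℝ
  | 0, x => x
  | n + 1, x => truncO (R (n + 1)) (β (n + 1)) (iterTrunc R β n x)

/-- `Cmat m = R_mᵀ H^{(m)} R_m`, where `H^{(m)} = H(R_m(τ^{(m−1,1)}(x) + β^{(m)}))`. -/
def Cmat {Q : ℕ} (R : ℕ → Matrix (Fin Q) (Fin Q) ℝ) (β : ℕ → Fin Q → ℝ)
    (x : Fin Q → ℝ) (m : ℕ) : Matrix (Fin Q) (Fin Q) ℝ :=
  (R m)ᵀ * Hmat ((R m).mulVec (iterTrunc R β (m - 1) x + β m)) * R m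

/-- `CmatPerp m = R_mᵀ H^{(m)⊥} R_m`. -/
def CmatPerp {Q : ℕ} (R : ℕ → Matrix (Fin Q) (Fin Q) ℝ) (β : ℕ → Fin Q → ℝ)
    (x : Fin Q → ℝ) (m : ℕ) : Matrix (Fin Q) (Fin Q) ℝ :=
  (R m)ᵀ * (1 - Hmat ((R m).mulVec (iterTrunc R β (m - 1) x + β m))) * R m

/-- `tailProd L k = C_L C_{L−1} ⋯ C_{L−k+1}` (the product of the `k` topmost factors);
in particular `tailProd L L = P⁺` and `tailProd L (L−ℓ) * CmatPerp ℓ = P⁻_ℓ`. -/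
def tailProd {Q : ℕ} (R : ℕ → Matrix (Fin Q) (Fin Q) ℝ) (β : ℕ → Fin Q → ℝ)
    (x : Fin Q → ℝ) (L : ℕ) : ℕ → Matrix (Fin Q) (Fin Q) ℝ
  | 0 => 1
  | k + 1 => tailProd R β x L k * Cmat R β x (L - k)


lemma relu_eq_Hmat {Q : ℕ} (v : Fin Q → ℝ) : relu v = (Hmat v).mulVec v := by
  funext r
  simp only [relu, Hmat, Matrix.mulVec_diagonal, heav]
  by_cases h : 0 < v r
  · simp [h, max_eq_left h.le]
  · simp [h, max_eq_right (le_of_not_gt h)]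

lemma truncO_eq {Q : ℕ} (R : Matrix (Fin Q) (Fin Q) ℝ)
    (hR : R ∈ Matrix.orthogonalGroup (Fin Q) ℝ) (β y : Fin Q → ℝ) :
    truncO R β y = (Rᵀ * Hmat (R.mulVec (y + β)) * R).mulVec y
      - (Rᵀ * (1 - Hmat (R.mulVec (y + β))) * R).mulVec β := by
  have hRt : Rᵀ * R = 1 := hR.1
  set H := Hmat (R.mulVec (y + β))
  have : truncO R β y = (Rᵀ * H * R).mulVec (y + β) - β := by
    simp only [truncO, relu_eq_Hmat, Matrix.mulVec_mulVec, H, Matrix.mul_assoc]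
  rw [this]
  have hβ : (β : Fin Q → ℝ) = (Rᵀ * R).mulVec β := by rw [hRt, Matrix.one_mulVec]
  rw [Matrix.mulVec_add]
  have h2 : (Rᵀ * (1 - H) * R).mulVec β
      = (Rᵀ * R).mulVec β - (Rᵀ * H * R).mulVec β := by
    rw [Matrix.mul_sub, Matrix.sub_mul, Matrix.mul_one, Matrix.sub_mulVec]
  rw [h2, hRt, Matrix.one_mulVec]
  abel

lemma tailProd_succ_left {Q : ℕ} (R : ℕ → Matrix (Fin Q) (Fin Q) ℝ)
    (β : ℕ → Fin Q → ℝ) (x : Fin Q → ℝ) (L : ℕ) :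
    ∀ k, tailProd R β x (L + 1) (k + 1) = Cmat R β x (L + 1) * tailProd R β x L k := by
  intro k
  induction k with
  | zero => simp [tailProd]
  | succ n ih =>
    show tailProd R β x (L+1) (n+1) * Cmat R β x (L+1 - (n+1)) = _
    rw [ih]
    have : L + 1 - (n + 1) = L - n := by omega
    rw [this, Matrix.mul_assoc]
    rfl

/-- the composition of truncation maps is the affine map
`τ^{(L,1)}(x) = P⁺ x − Σ_{ℓ=1}^L P⁻_ℓ β^{(ℓ)}`. -/
theorem iterated_truncation_formula {Q : ℕ} (hQ : 1 ≤ Q) (L : ℕ) (hL : 1 ≤ L)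
    (R : ℕ → Matrix (Fin Q) (Fin Q) ℝ)
    (hR : ∀ ℓ, 1 ≤ ℓ → ℓ ≤ L → R ℓ ∈ Matrix.orthogonalGroup (Fin Q) ℝ)
    (β : ℕ → Fin Q → ℝ) (x : Fin Q → ℝ) :
    iterTrunc R β L x =
      (tailProd R β x L L).mulVec x -
        ∑ ℓ ∈ Finset.Icc 1 L,
          (tailProd R β x L (L - ℓ) * CmatPerp R β x ℓ).mulVec (β ℓ) := by
  induction L, hL using Nat.le_induction with
  | base =>
    have h1 : iterTrunc R β 1 x = truncO (R 1) (β 1) x := rfl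
    rw [h1, truncO_eq (R 1) (hR 1 le_rfl le_rfl)]
    simp [tailProd, Cmat, CmatPerp, iterTrunc]
  | succ L hL1 ih =>
    have ih' := ih (fun ℓ h1 h2 => hR ℓ h1 (h2.trans (Nat.le_succ L)))
    have h1 : iterTrunc R β (L + 1) x = truncO (R (L + 1)) (β (L + 1)) (iterTrunc R β L x) := rfl
    rw [h1, truncO_eq (R (L+1)) (hR (L+1) (by omega) le_rfl)]
    have hC : (R (L+1))ᵀ * Hmat ((R (L+1)).mulVec (iterTrunc R β L x + β (L+1))) * R (L+1)
        = Cmat R β x (L+1) := rfl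
    have hP : (R (L+1))ᵀ * (1 - Hmat ((R (L+1)).mulVec (iterTrunc R β L x + β (L+1)))) * R (L+1)
        = CmatPerp R β x (L+1) := rfl
    rw [hC, hP, ih', Matrix.mulVec_sub, Matrix.mulVec_mulVec, ← tailProd_succ_left,
      Finset.sum_Icc_succ_top (by omega : 1 ≤ L + 1)]
    have hsum : (Cmat R β x (L+1)).mulVec
        (∑ ℓ ∈ Finset.Icc 1 L, (tailProd R β x L (L - ℓ) * CmatPerp R β x ℓ).mulVec (β ℓ))
        = ∑ ℓ ∈ Finset.Icc 1 L,
            (tailProd R β x (L+1) (L + 1 - ℓ) * CmatPerp R β x ℓ).mulVec (β ℓ) := by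
      rw [← Matrix.mulVecLin_apply, map_sum]
      simp only [Matrix.mulVecLin_apply]
      refine Finset.sum_congr rfl fun ℓ hℓ => ?_
      have hℓL : ℓ ≤ L := (Finset.mem_Icc.mp hℓ).2
      have h3 : L + 1 - ℓ = (L - ℓ) + 1 := by omega
      rw [Matrix.mulVec_mulVec, h3, tailProd_succ_left, Matrix.mul_assoc]
    rw [hsum]
    have h4 : L + 1 - (L + 1) = 0 := by omega
    rw [h4]
    show _ = _ - (_ + (tailProd R β x (L+1) 0 * CmatPerp R β x (L+1)).mulVec (β (L+1)))
    have h5 : tailProd R β x (L+1) 0 = 1 := rfl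
    rw [h5, Matrix.one_mul]
    abel

end
end

section
/- Let L ≥ 1, let R_1,…,R_L ∈ O(Q) and β^{(1)},…,β^{(L)} ∈ ℝ^Q, fix x ∈ ℝ^Q and ℓ ∈ {1,…,L}. With τ^{(m)} = τ_{R_m, β^{(m)}}, τ^{(m,1)} = τ^{(m)} ∘ ⋯ ∘ τ^{(1)} (τ^{(0,1)} = identity), assume the nondegeneracy condition that for every m = 1,…,L and every coordinate r, ( R_m( τ^{(m−1,1)}(x) + β^{(m)} ) )_r ≠ 0. Set H^{(m)} = H( R_m( τ^{(m−1,1)}(x) + β^{(m)} ) ) and P⁻_{ℓ,L} = (R_L^T H^{(L)} R_L) ⋯ (R_{ℓ+1}^T H^{(ℓ+1)} R_{ℓ+1}) (R_ℓ^T (1 − H^{(ℓ)}) R_ℓ), with P⁻_{L,L} = R_L^T (1 − H^{(L)}) R_L. Then the map b ↦ (τ_{R_L,β^{(L)}} ∘ ⋯ ∘ τ_{R_{ℓ+1},β^{(ℓ+1)}} ∘ τ_{R_ℓ, b} ∘ τ^{(ℓ−1,1)})(x), obtained by varying only the ℓ-th bias, is Fréchet differentiable at b = β^{(ℓ)} with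 derivative given by the matrix −P⁻_{ℓ,L}. -/
noncomputable section

open scoped Matrix

/-- `topComp L k = τ^{(L)} ∘ ⋯ ∘ τ^{(L−k+1)}` (the `k` topmost truncation maps). -/
def topComp {Q : ℕ} (R : ℕ → Matrix (Fin Q) (Fin Q) ℝ) (β : ℕ → Fin Q → ℝ) (L : ℕ) :
    ℕ → (Fin Q → ℝ) → Fin Q → ℝ
  | 0, z => z
  | k + 1, z => topComp R β L k (truncO (R (L - k)) (β (L - k)) z)

/-- ReLU agrees with multiplication by `Hmat v₀` near a nondegenerate point `v₀`. -/
lemma relu_eventuallyEq {Q : ℕ} (v₀ : Fin Q → ℝ) (h : ∀ r, v₀ r ≠ 0) :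
    ∀ᶠ v in nhds v₀, relu v = (Hmat v₀).mulVec v := by
  have h2 : ∀ᶠ v in nhds v₀, ∀ r, relu v r = (Hmat v₀).mulVec v r := by
    rw [Filter.eventually_all]
    intro r
    rcases lt_or_gt_of_ne (h r) with hneg | hpos
    · have hop : ∀ᶠ v in nhds v₀, v r < 0 :=
        (isOpen_lt (continuous_apply r) continuous_const).eventually_mem hneg
      filter_upwards [hop] with v hv
      simp [relu, Hmat, heav, Matrix.mulVec_diagonal, max_eq_right hv.le,
        if_neg (not_lt.mpr hneg.le)]
    · have hop : ∀ᶠ v in nhds v₀, 0 < v r :=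
        (isOpen_lt continuous_const (continuous_apply r)).eventually_mem hpos
      filter_upwards [hop] with v hv
      simp [relu, Hmat, heav, Matrix.mulVec_diagonal, max_eq_left hv.le, if_pos hpos]
  exact h2.mono fun v hv => funext hv

/-- Derivative of a matrix-linear map given as `mulVec`. -/
lemma hasFDerivAt_mulVec {Q : ℕ} (A : Matrix (Fin Q) (Fin Q) ℝ) (y : Fin Q → ℝ) :
    HasFDerivAt (fun z : Fin Q → ℝ => A.mulVec z)
      (LinearMap.toContinuousLinearMap A.mulVecLin) y := by
  have := (LinearMap.toContinuousLinearMap (Matrix.mulVecLin A)).hasFDerivAt (x := y)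
  simpa using this

/-- Derivative of `z ↦ τ_{R,β}(z)` at a nondegenerate point. -/
lemma truncO_hasFDerivAt_state {Q : ℕ} (R : Matrix (Fin Q) (Fin Q) ℝ) (β y : Fin Q → ℝ)
    (h : ∀ r, R.mulVec (y + β) r ≠ 0) :
    HasFDerivAt (fun z => truncO R β z)
      (LinearMap.toContinuousLinearMap
        (Rᵀ * Hmat (R.mulVec (y + β)) * R).mulVecLin) y := by
  set A := Rᵀ * Hmat (R.mulVec (y + β)) * R with hA
  have hlin : HasFDerivAt (fun z : Fin Q → ℝ => A.mulVec z + (A.mulVec β - β))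
      (LinearMap.toContinuousLinearMap A.mulVecLin) y :=
    (hasFDerivAt_mulVec A y).add_const _
  refine hlin.congr_of_eventuallyEq ?_
  have hc : Continuous fun z : Fin Q → ℝ => R.mulVec (z + β) := by
    exact ((Matrix.mulVecLin R).continuous_of_finiteDimensional).comp
      (continuous_id.add continuous_const)
  have hev := (hc.continuousAt (x := y)).eventually
    (relu_eventuallyEq (R.mulVec (y + β)) h)
  filter_upwards [hev] with z hz
  simp only [truncO, hz, hA, Matrix.mulVec_mulVec, ← Matrix.mul_assoc]
  rw [Matrix.mulVec_add]
  abel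

/-- Derivative of `b ↦ τ_{R,b}(y)` at a nondegenerate point. -/
lemma truncO_hasFDerivAt_bias {Q : ℕ} (R : Matrix (Fin Q) (Fin Q) ℝ) (β y : Fin Q → ℝ)
    (h : ∀ r, R.mulVec (y + β) r ≠ 0) :
    HasFDerivAt (fun b => truncO R b y)
      (LinearMap.toContinuousLinearMap
        (Rᵀ * Hmat (R.mulVec (y + β)) * R - 1).mulVecLin) β := by
  set A := Rᵀ * Hmat (R.mulVec (y + β)) * R with hA
  have hlin : HasFDerivAt (fun b : Fin Q → ℝ => A.mulVec y + (A - 1).mulVec b)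
      (LinearMap.toContinuousLinearMap (A - 1).mulVecLin) β :=
    (hasFDerivAt_mulVec (A - 1) β).const_add _
  refine hlin.congr_of_eventuallyEq ?_
  have hc : Continuous fun b : Fin Q → ℝ => R.mulVec (y + b) := by
    exact ((Matrix.mulVecLin R).continuous_of_finiteDimensional).comp
      (continuous_const.add continuous_id)
  have hev := (hc.continuousAt (x := β)).eventually
    (relu_eventuallyEq (R.mulVec (y + β)) h)
  filter_upwards [hev] with b hb
  simp only [truncO, hb, hA, Matrix.mulVec_mulVec, ← Matrix.mul_assoc,
    Matrix.sub_mulVec, Matrix.one_mulVec]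
  rw [Matrix.mulVec_add]
  abel

lemma topComp_hasFDerivAt {Q : ℕ} (L : ℕ)
    (R : ℕ → Matrix (Fin Q) (Fin Q) ℝ) (β : ℕ → Fin Q → ℝ) (x : Fin Q → ℝ)
    (hnd : ∀ m, 1 ≤ m → m ≤ L → ∀ r,
      (R m).mulVec (iterTrunc R β (m - 1) x + β m) r ≠ 0) :
    ∀ k, k ≤ L →
      HasFDerivAt (topComp R β L k)
        (LinearMap.toContinuousLinearMap (tailProd R β x L k).mulVecLin)
        (iterTrunc R β (L - k) x) := by
  intro k
  induction k with
  | zero =>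
    intro _
    have h := (hasFDerivAt_mulVec (1 : Matrix (Fin Q) (Fin Q) ℝ)
      (iterTrunc R β (L - 0) x))
    refine h.congr_of_eventuallyEq (Filter.Eventually.of_forall fun z => ?_)
    simp [topComp, Matrix.one_mulVec]
  | succ k ih =>
    intro hk
    have hkL : k ≤ L := Nat.le_of_succ_le hk
    set m := L - k with hm
    have hm1 : 1 ≤ m := by omega
    have hmL : m ≤ L := by omega
    have hpt : L - (k + 1) = m - 1 := by omega
    have hval : truncO (R m) (β m) (iterTrunc R β (m - 1) x) = iterTrunc R β (L - k) x := by
      have h2 : L - k = (m - 1) + 1 := by omega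
      have h3 : m - 1 + 1 = m := by omega
      rw [h2, iterTrunc, h3]
    have hinner := truncO_hasFDerivAt_state (R m) (β m) (iterTrunc R β (m - 1) x)
      (hnd m hm1 hmL)
    have houter := ih hkL
    rw [← hval] at houter
    have hcomp := houter.comp (iterTrunc R β (m - 1) x) hinner
    have heq : (fun z => topComp R β L k (truncO (R m) (β m) z)) = topComp R β L (k + 1) := by
      funext z; rw [topComp]
    rw [hpt]
    have hmat : tailProd R β x L (k + 1) =
        tailProd R β x L k * ((R m)ᵀ * Hmat ((R m).mulVec (iterTrunc R β (m - 1) x + β m)) * R m) := by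
      rw [tailProd]; rfl
    have hCLM : (LinearMap.toContinuousLinearMap (tailProd R β x L k).mulVecLin).comp
        (LinearMap.toContinuousLinearMap
          ((R m)ᵀ * Hmat ((R m).mulVec (iterTrunc R β (m - 1) x + β m)) * R m).mulVecLin) =
        LinearMap.toContinuousLinearMap (tailProd R β x L (k + 1)).mulVecLin := by
      ext v
      simp [hmat, Matrix.mulVecLin_mul]
    rw [← heq, ← hCLM]
    exact hcomp

/-- under the nondegeneracy condition, the full network output as a function of
the `ℓ`-th bias is Fréchet differentiable at `β^{(ℓ)}` with derivative `−P⁻_{ℓ,L}`. -/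
theorem bias_derivative_general {Q : ℕ} (hQ : 1 ≤ Q) (L : ℕ) (hL : 1 ≤ L)
    (R : ℕ → Matrix (Fin Q) (Fin Q) ℝ)
    (hR : ∀ m, 1 ≤ m → m ≤ L → R m ∈ Matrix.orthogonalGroup (Fin Q) ℝ)
    (β : ℕ → Fin Q → ℝ) (x : Fin Q → ℝ)
    (ℓ : ℕ) (hℓ1 : 1 ≤ ℓ) (hℓL : ℓ ≤ L)
    (hnd : ∀ m, 1 ≤ m → m ≤ L → ∀ r,
      (R m).mulVec (iterTrunc R β (m - 1) x + β m) r ≠ 0) :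
    HasFDerivAt
      (fun b : Fin Q → ℝ =>
        topComp R β L (L - ℓ) (truncO (R ℓ) b (iterTrunc R β (ℓ - 1) x)))
      (LinearMap.toContinuousLinearMap
        (Matrix.mulVecLin (-(tailProd R β x L (L - ℓ) * CmatPerp R β x ℓ)))) (β ℓ) := by
  have hval : truncO (R ℓ) (β ℓ) (iterTrunc R β (ℓ - 1) x) = iterTrunc R β (L - (L - ℓ)) x := by
    have h1 : L - (L - ℓ) = (ℓ - 1) + 1 := by omega
    have h3 : ℓ - 1 + 1 = ℓ := by omega
    rw [h1, iterTrunc, h3]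
  have houter := topComp_hasFDerivAt L R β x hnd (L - ℓ) (Nat.sub_le L ℓ)
  rw [← hval] at houter
  have hinner := truncO_hasFDerivAt_bias (R ℓ) (β ℓ) (iterTrunc R β (ℓ - 1) x)
    (hnd ℓ hℓ1 hℓL)
  have hcomp := HasFDerivAt.comp (β ℓ)
    (f := fun b => truncO (R ℓ) b (iterTrunc R β (ℓ - 1) x)) houter hinner
  -- matrix identity: Rᵀ H R - 1 = -(CmatPerp ℓ)
  have horth : (R ℓ)ᵀ * R ℓ = 1 := by
    have := (Matrix.mem_orthogonalGroup_iff' (Fin Q) ℝ).mp (hR ℓ hℓ1 hℓL)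
    exact this
  have hmatid : (R ℓ)ᵀ * Hmat ((R ℓ).mulVec (iterTrunc R β (ℓ - 1) x + β ℓ)) * R ℓ - 1 =
      -(CmatPerp R β x ℓ) := by
    rw [CmatPerp]
    rw [Matrix.mul_sub, Matrix.mul_one, Matrix.sub_mul, horth]
    abel
  have hCLM : (LinearMap.toContinuousLinearMap (tailProd R β x L (L - ℓ)).mulVecLin).comp
      (LinearMap.toContinuousLinearMap
        ((R ℓ)ᵀ * Hmat ((R ℓ).mulVec (iterTrunc R β (ℓ - 1) x + β ℓ)) * R ℓ - 1).mulVecLin) =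
      LinearMap.toContinuousLinearMap
        (Matrix.mulVecLin (-(tailProd R β x L (L - ℓ) * CmatPerp R β x ℓ))) := by
    ext v
    rw [hmatid]
    simp [Matrix.mul_neg, Matrix.mulVecLin_mul]
  rw [← hCLM]
  exact hcomp

end
end

section
/- Let Y ∈ ℝ^{Q×Q} and let B, W : ℝ → ℝ^{Q×Q} be differentiable curves satisfying the gradient flow equations ∂_s B(s) = −W(s)^T (W(s) B(s) + Y) and ∂_s W(s) = −(W(s) B(s) + Y) B(s)^T. Then the matrix-valued quantity I(s) = B(s) B(s)^T − W(s)^T W(s) is conserved: I(s) = I(0) for all s. -/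
noncomputable section

open scoped Matrix

/-- along the gradient flow `∂ₛB = −Wᵀ(WB+Y)`, `∂ₛW = −(WB+Y)Bᵀ`, the
matrix-valued quantity `I(s) = B Bᵀ − Wᵀ W` is conserved. -/
theorem conservation_law {Q : ℕ} (hQ : 1 ≤ Q)
    (Y : Matrix (Fin Q) (Fin Q) ℝ)
    (B W : ℝ → Matrix (Fin Q) (Fin Q) ℝ)
    (hB : ∀ s j k, HasDerivAt (fun t => B t j k) ((-((W s)ᵀ * (W s * B s + Y))) j k) s)
    (hW : ∀ s j k, HasDerivAt (fun t => W t j k) ((-((W s * B s + Y) * (B s)ᵀ)) j k) s) :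
    ∀ s : ℝ, B s * (B s)ᵀ - (W s)ᵀ * W s = B 0 * (B 0)ᵀ - (W 0)ᵀ * W 0 := by
  have key : ∀ (j k : Fin Q) (t : ℝ),
      HasDerivAt (fun u => (B u * (B u)ᵀ - (W u)ᵀ * W u) j k) 0 t := by
    intro j k t
    set M := W t * B t + Y with hM
    have h1 : HasDerivAt (fun u => (B u * (B u)ᵀ) j k)
        (((-((W t)ᵀ * M)) * (B t)ᵀ + B t * (-((W t)ᵀ * M))ᵀ) j k) t := by
      have h : ∀ l : Fin Q, HasDerivAt (fun u => B u j l * B u k l)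
          ((-((W t)ᵀ * M)) j l * B t k l + B t j l * (-((W t)ᵀ * M)) k l) t :=
        fun l => (hB t j l).mul (hB t k l)
      have := HasDerivAt.fun_sum (fun l (_ : l ∈ Finset.univ) => h l)
      simpa [Matrix.mul_apply, Matrix.add_apply, Matrix.transpose_apply,
        Finset.sum_add_distrib, mul_comm] using this
    have h2 : HasDerivAt (fun u => ((W u)ᵀ * W u) j k)
        (((-(M * (B t)ᵀ))ᵀ * W t + (W t)ᵀ * (-(M * (B t)ᵀ))) j k) t := by
      have h : ∀ l : Fin Q, HasDerivAt (fun u => W u l j * W u l k)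
          ((-(M * (B t)ᵀ)) l j * W t l k + W t l j * (-(M * (B t)ᵀ)) l k) t :=
        fun l => (hW t l j).mul (hW t l k)
      have := HasDerivAt.fun_sum (fun l (_ : l ∈ Finset.univ) => h l)
      simpa [Matrix.mul_apply, Matrix.add_apply, Matrix.transpose_apply,
        Finset.sum_add_distrib, mul_comm] using this
    have hmat : ((-((W t)ᵀ * M)) * (B t)ᵀ + B t * (-((W t)ᵀ * M))ᵀ) -
        ((-(M * (B t)ᵀ))ᵀ * W t + (W t)ᵀ * (-(M * (B t)ᵀ))) = 0 := by
      simp [Matrix.transpose_mul, Matrix.transpose_neg, Matrix.mul_assoc,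
        Matrix.neg_mul, Matrix.mul_neg]
      abel
    have heq : (((-((W t)ᵀ * M)) * (B t)ᵀ + B t * (-((W t)ᵀ * M))ᵀ) j k) -
        (((-(M * (B t)ᵀ))ᵀ * W t + (W t)ᵀ * (-(M * (B t)ᵀ))) j k) = 0 := by
      have := congrFun (congrFun hmat j) k
      simpa [Matrix.sub_apply] using this
    have hfun : (fun u => (B u * (B u)ᵀ - (W u)ᵀ * W u) j k)
        = fun u => (B u * (B u)ᵀ) j k - ((W u)ᵀ * W u) j k := by
      funext u; simp [Matrix.sub_apply]
    rw [hfun, ← heq]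
    exact h1.sub h2
  intro s
  ext j k
  have hconst := is_const_of_deriv_eq_zero (f := fun u => (B u * (B u)ᵀ - (W u)ᵀ * W u) j k)
    (fun t => (key j k t).differentiableAt) (fun t => (key j k t).deriv)
  exact hconst s 0

end
end

section
/- Let Y ∈ ℝ^{Q×Q} and let B, W : [0,∞) → ℝ^{Q×Q} be C¹ solutions of ∂_s B = −W^T (W B + Y) and ∂_s W = −(W B + Y) B^T. Suppose there exists λ₀ > 0 such that either B(0)B(0)^T − W(0)^T W(0) ≥ λ₀·1 or W(0)^T W(0) − B(0)B(0)^T ≥ λ₀·1 in the positive semidefinite order. Then: (a) tr( (W(s)B(s)+Y)^T (W(s)B(s)+Y) ) ≤ e^{−2 λ₀ s} · tr( (W(0)B(0)+Y)^T (W(0)B(0)+Y) ) for all s ≥ 0, so the cost converges to zero exponentially; (b) sup_{s ≥ 0} ‖W(s)‖_op < ∞ and sup_{s ≥ 0} ‖B(s)‖_op < ∞; (c) the limits W_∞ = lim_{s→∞} W(s) and B_∞ = lim_{s→∞} B(s) exist, and W_∞ B_∞ = −Y. -/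
noncomputable section

open scoped Matrix

/-- Operator norm of a matrix, induced by the Euclidean norm. -/
def opNorm {Q : ℕ} (A : Matrix (Fin Q) (Fin Q) ℝ) : ℝ :=
  ‖LinearMap.toContinuousLinearMap (Matrix.toEuclideanLin A)‖

namespace SGECAux

open Matrix Set Filter

attribute [local instance] Matrix.frobeniusSeminormedAddCommGroup
  Matrix.frobeniusNormedAddCommGroup Matrix.frobeniusNormedSpace
  Matrix.frobeniusNormedRing Matrix.frobeniusNormedAlgebra

variable {Q : ℕ}

abbrev MQ (Q : ℕ) := Matrix (Fin Q) (Fin Q) ℝ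

/-! ### Transfer of derivatives between entries and matrices -/

def entryEquiv (Q : ℕ) : MQ Q ≃L[ℝ] (Fin Q → Fin Q → ℝ) :=
  LinearEquiv.toContinuousLinearEquiv
    { toFun := fun A j k => A j k, invFun := fun f => Matrix.of f,
      map_add' := fun _ _ => rfl, map_smul' := fun _ _ => rfl,
      left_inv := fun _ => rfl, right_inv := fun _ => rfl }

theorem hasDerivWithinAt_matrix {f : ℝ → MQ Q} {f' : MQ Q}
    {s : Set ℝ} {x : ℝ} :
    HasDerivWithinAt f f' s x ↔ ∀ j k, HasDerivWithinAt (fun t => f t j k) (f' j k) s x := by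
  constructor
  · intro h j k
    have h1 : HasDerivWithinAt (fun t => entryEquiv Q (f t)) (entryEquiv Q f') s x :=
      (entryEquiv Q).hasFDerivAt.comp_hasDerivWithinAt x h
    exact (hasDerivWithinAt_pi.1 ((hasDerivWithinAt_pi.1 h1) j)) k
  · intro h
    have h1 : HasDerivWithinAt (fun t => entryEquiv Q (f t)) (entryEquiv Q f') s x :=
      hasDerivWithinAt_pi.2 fun j => hasDerivWithinAt_pi.2 fun k => h j k
    have h2 := ((entryEquiv Q).symm).hasFDerivAt.comp_hasDerivWithinAt x h1
    exact h2

theorem hd_mtrans {f : ℝ → MQ Q} {f' : MQ Q}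
    {s : Set ℝ} {x : ℝ} (h : HasDerivWithinAt f f' s x) :
    HasDerivWithinAt (fun t => (f t)ᵀ) f'ᵀ s x :=
  hasDerivWithinAt_matrix.2 fun j k => hasDerivWithinAt_matrix.1 h k j

theorem hd_mtrace {f : ℝ → MQ Q} {f' : MQ Q}
    {s : Set ℝ} {x : ℝ} (h : HasDerivWithinAt f f' s x) :
    HasDerivWithinAt (fun t => Matrix.trace (f t)) (Matrix.trace f') s x := by
  have h0 : ∀ j : Fin Q, HasDerivWithinAt (fun t => f t j j) (f' j j) s x :=
    fun j => hasDerivWithinAt_matrix.1 h j j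
  simpa [Matrix.trace, Matrix.diag] using HasDerivWithinAt.fun_sum (u := Finset.univ)
    (A := fun j t => f t j j) (A' := fun j => f' j j) (fun j _ => h0 j)

theorem hd_trace_sq {f : ℝ → MQ Q} {f' : MQ Q}
    {s : Set ℝ} {x : ℝ} (h : HasDerivWithinAt f f' s x) :
    HasDerivWithinAt (fun t => Matrix.trace ((f t)ᵀ * f t))
      (2 * Matrix.trace ((f x)ᵀ * f')) s x := by
  have h1 := hd_mtrace ((hd_mtrans h).mul h)
  convert h1 using 1
  · rfl
  have h2 : Matrix.trace (f'ᵀ * f x) = Matrix.trace ((f x)ᵀ * f') := by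
    rw [← Matrix.trace_transpose (f'ᵀ * f x), Matrix.transpose_mul, Matrix.transpose_transpose]
  rw [Matrix.trace_add, h2]; ring

/-! ### Quadratic trace inequalities -/

lemma trace_sq_eq (A : MQ Q) : Matrix.trace (Aᵀ * A) = ∑ k, ∑ j, (A j k)^2 := by
  simp [Matrix.trace, Matrix.diag, Matrix.mul_apply, sq]

lemma trace_sq_nonneg (A : MQ Q) : 0 ≤ Matrix.trace (Aᵀ * A) := by
  rw [trace_sq_eq]
  exact Finset.sum_nonneg fun k _ => Finset.sum_nonneg fun j _ => sq_nonneg _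

lemma entry_sq_le_trace (A : MQ Q) (j k : Fin Q) : (A j k)^2 ≤ Matrix.trace (Aᵀ * A) := by
  rw [trace_sq_eq]
  calc (A j k)^2 ≤ ∑ j', (A j' k)^2 :=
        Finset.single_le_sum (fun i _ => sq_nonneg (A i k)) (Finset.mem_univ j)
    _ ≤ ∑ k', ∑ j', (A j' k')^2 :=
        Finset.single_le_sum (f := fun k' => ∑ j', (A j' k')^2)
          (fun i _ => Finset.sum_nonneg fun j' _ => sq_nonneg _) (Finset.mem_univ k)

/-- Cauchy-Schwarz for the Frobenius inner product. -/
lemma trace_CS (A B : MQ Q) :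
    (Matrix.trace (Aᵀ * B))^2 ≤ Matrix.trace (Aᵀ * A) * Matrix.trace (Bᵀ * B) := by
  have h1 : Matrix.trace (Aᵀ * B) = ∑ p : Fin Q × Fin Q, A p.2 p.1 * B p.2 p.1 := by
    rw [Fintype.sum_prod_type]
    simp [Matrix.trace, Matrix.diag, Matrix.mul_apply]
  rw [h1, trace_sq_eq, trace_sq_eq]
  calc (∑ p : Fin Q × Fin Q, A p.2 p.1 * B p.2 p.1)^2
      ≤ (∑ p : Fin Q × Fin Q, (A p.2 p.1)^2) * (∑ p : Fin Q × Fin Q, (B p.2 p.1)^2) :=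
        Finset.sum_mul_sq_le_sq_mul_sq Finset.univ _ _
    _ = (∑ k, ∑ j, (A j k)^2) * (∑ k, ∑ j, (B j k)^2) := by
        rw [Fintype.sum_prod_type, Fintype.sum_prod_type]

/-- Frobenius submultiplicativity, squared form. -/
lemma trace_mul_sq_le (A B : MQ Q) :
    Matrix.trace ((A * B)ᵀ * (A * B)) ≤ Matrix.trace (Aᵀ * A) * Matrix.trace (Bᵀ * B) := by
  rw [trace_sq_eq]
  have key : ∀ (j k : Fin Q), ((A * B) j k)^2 ≤ (∑ l, (A j l)^2) * (∑ l, (B l k)^2) := by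
    intro j k
    rw [Matrix.mul_apply]
    exact Finset.sum_mul_sq_le_sq_mul_sq Finset.univ _ _
  calc ∑ k, ∑ j, ((A * B) j k)^2
      ≤ ∑ k, ∑ j, (∑ l, (A j l)^2) * (∑ l, (B l k)^2) :=
        Finset.sum_le_sum fun k _ => Finset.sum_le_sum fun j _ => key j k
    _ = (∑ j, ∑ l, (A j l)^2) * (∑ k, ∑ l, (B l k)^2) := by
        rw [Finset.sum_congr rfl (fun k _ => (Finset.sum_mul _ _ _).symm), ← Finset.mul_sum]
    _ = Matrix.trace (Aᵀ * A) * Matrix.trace (Bᵀ * B) := by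
        rw [trace_sq_eq, trace_sq_eq]
        congr 1
        exact Finset.sum_comm

/-! ### Positive semidefiniteness facts -/

lemma transpose_mul_self_posSemidef (A : MQ Q) : (Aᵀ * A).PosSemidef := by
  have := Matrix.posSemidef_conjTranspose_mul_self A
  rwa [Matrix.conjTranspose_eq_transpose_of_trivial] at this

lemma rdot_nonneg (x : Fin Q → ℝ) : 0 ≤ x ⬝ᵥ x :=
  Finset.sum_nonneg fun _ _ => mul_self_nonneg _

lemma rdot_eq_zero {x : Fin Q → ℝ} (h : x ⬝ᵥ x = 0) : x = 0 := by
  funext i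
  have := Finset.sum_eq_zero_iff_of_nonneg (fun i _ => mul_self_nonneg (x i)) |>.1 h i
    (Finset.mem_univ i)
  simpa [mul_self_eq_zero] using this

lemma rdot_AtA (A : MQ Q) (x : Fin Q → ℝ) : x ⬝ᵥ ((Aᵀ * A) *ᵥ x) = (A *ᵥ x) ⬝ᵥ (A *ᵥ x) := by
  rw [← Matrix.mulVec_mulVec, Matrix.dotProduct_mulVec, Matrix.vecMul_transpose]

lemma rdot_sub_smul_one (M : MQ Q) (lam : ℝ) (x : Fin Q → ℝ) :
    x ⬝ᵥ ((M - lam • 1) *ᵥ x) = x ⬝ᵥ (M *ᵥ x) - lam * (x ⬝ᵥ x) := by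
  rw [Matrix.sub_mulVec, dotProduct_sub, Matrix.smul_mulVec,
    Matrix.one_mulVec, dotProduct_smul]
  rfl

/-- the key spectral lemma : `A Aᵀ ≥ λ` implies `Aᵀ A ≥ λ`. -/
lemma psd_swap {A : MQ Q} {lam : ℝ} (hlam : 0 < lam)
    (h : (A * Aᵀ - lam • 1).PosSemidef) : (Aᵀ * A - lam • 1).PosSemidef := by
  have hsA : ∀ (x : Fin Q → ℝ), star x = x := fun x => funext fun i => star_trivial _
  have hAAt : (A * Aᵀ).PosSemidef := by
    have := Matrix.posSemidef_self_mul_conjTranspose A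
    rwa [Matrix.conjTranspose_eq_transpose_of_trivial] at this
  have hPD : (A * Aᵀ).PosDef := by
    refine Matrix.PosDef.of_dotProduct_mulVec_pos hAAt.1 fun x hx => ?_
    have h1 := h.dotProduct_mulVec_nonneg x
    rw [hsA, rdot_sub_smul_one] at h1
    rw [hsA]
    have hxx : 0 < x ⬝ᵥ x :=
      (rdot_nonneg x).lt_of_ne' fun h' => hx (rdot_eq_zero h')
    nlinarith [mul_pos hlam hxx]
  have hdet : IsUnit (A.det) := by
    have h0 := hPD.det_pos
    rw [Matrix.det_mul, Matrix.det_transpose] at h0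
    have : A.det ≠ 0 := fun hz => by rw [hz] at h0; simp at h0
    exact this.isUnit
  have hinj : ∀ v : Fin Q → ℝ, A *ᵥ v = 0 → v = 0 := by
    intro v hv
    have h1 : A⁻¹ *ᵥ (A *ᵥ v) = v := by
      rw [Matrix.mulVec_mulVec, Matrix.nonsing_inv_mul _ hdet, Matrix.one_mulVec]
    rw [hv, Matrix.mulVec_zero] at h1
    exact h1.symm
  have hHerm : (Aᵀ * A - lam • 1).IsHermitian := by
    have h1 := (transpose_mul_self_posSemidef A).1
    have h2 : (lam • (1 : MQ Q)).IsHermitian := by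
      simp [Matrix.IsHermitian, Matrix.conjTranspose_smul]
    exact h1.sub h2
  refine hHerm.posSemidef_iff_eigenvalues_nonneg.2 fun i => show (0:ℝ) ≤ _ from ?_
  set μ := hHerm.eigenvalues i with hμ
  by_contra hneg
  push_neg at hneg
  set v : Fin Q → ℝ := ⇑(hHerm.eigenvectorBasis i) with hv
  have hvne : v ≠ 0 := by
    have h0' := hHerm.eigenvectorBasis.orthonormal.ne_zero i
    intro h0
    apply h0'
    have := congrArg (WithLp.equiv 2 ((i : Fin Q) → ℝ)).symm (hv ▸ h0)
    simpa using this
  have heig : (Aᵀ * A - lam • 1) *ᵥ v = μ • v := hHerm.mulVec_eigenvectorBasis i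
  have heig2 : (Aᵀ * A) *ᵥ v = (μ + lam) • v := by
    have h3 : (Aᵀ * A) *ᵥ v - lam • v = μ • v := by
      rw [← heig, Matrix.sub_mulVec, Matrix.smul_mulVec, Matrix.one_mulVec]
    funext j
    have := congrFun h3 j
    simp only [Pi.sub_apply, Pi.smul_apply, smul_eq_mul] at this ⊢
    linarith
  set w : Fin Q → ℝ := A *ᵥ v with hw
  have hww : w ⬝ᵥ w = (μ + lam) * (v ⬝ᵥ v) := by
    rw [hw, ← rdot_AtA, heig2, dotProduct_smul]; rfl
  have hvv : 0 < v ⬝ᵥ v :=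
    (rdot_nonneg v).lt_of_ne' fun h' => hvne (rdot_eq_zero h')
  have hwMul : (A * Aᵀ) *ᵥ w = (μ + lam) • w := by
    rw [hw, Matrix.mulVec_mulVec, Matrix.mul_assoc, ← Matrix.mulVec_mulVec, heig2,
      Matrix.mulVec_smul]
  rcases eq_or_lt_of_le (rdot_nonneg w) with hww0 | hwpos
  · exact hvne (hinj v (rdot_eq_zero hww0.symm))
  · have h1 := h.dotProduct_mulVec_nonneg w
    rw [hsA, rdot_sub_smul_one, hwMul, dotProduct_smul] at h1
    rw [smul_eq_mul] at h1
    nlinarith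

lemma psd_eq_ctm {P : MQ Q} (hP : P.PosSemidef) : ∃ C : MQ Q, P = Cᴴ * C := by
  open scoped MatrixOrder in
  exact ⟨CFC.sqrt P, by rw [(CFC.sqrt_nonneg P).posSemidef.1.eq, CFC.sqrt_mul_sqrt_self P hP.nonneg]⟩

/-- trace of a product of two PSD matrices is nonnegative. -/
lemma trace_psd_mul_nonneg {P S : MQ Q} (hP : P.PosSemidef) (hS : S.PosSemidef) :
    0 ≤ Matrix.trace (P * S) := by
  obtain ⟨C, hC⟩ := psd_eq_ctm hP
  obtain ⟨D, hD⟩ := psd_eq_ctm hS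
  rw [Matrix.conjTranspose_eq_transpose_of_trivial] at hC hD
  subst hC hD
  have h1 : Matrix.trace ((Cᵀ * C) * (Dᵀ * D)) = Matrix.trace ((C * Dᵀ)ᵀ * (C * Dᵀ)) := by
    rw [Matrix.transpose_mul, Matrix.transpose_transpose]
    rw [show Cᵀ * C * (Dᵀ * D) = (Cᵀ * (C * Dᵀ)) * D from by simp [Matrix.mul_assoc]]
    rw [Matrix.trace_mul_comm]
    simp [Matrix.mul_assoc]
  rw [h1]
  exact trace_sq_nonneg _

/-! ### Scalar calculus helpers -/

lemma antitoneOn_Ici {f f' : ℝ → ℝ}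
    (hf : ∀ s ∈ Set.Ici (0:ℝ), HasDerivWithinAt f (f' s) (Set.Ici 0) s)
    (hf' : ∀ s ∈ Set.Ioi (0:ℝ), f' s ≤ 0) : AntitoneOn f (Set.Ici 0) := by
  apply antitoneOn_of_hasDerivWithinAt_nonpos (convex_Ici 0)
    (fun s hs => (hf s hs).continuousWithinAt) (f' := f')
  · intro x hx
    rw [interior_Ici] at hx
    exact ((hf x (Set.mem_Ici.2 (le_of_lt hx))).mono (by rw [interior_Ici]; exact Set.Ioi_subset_Ici_self))
  · intro x hx
    rw [interior_Ici] at hx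
    exact hf' x hx

lemma monotoneOn_Ici {f f' : ℝ → ℝ}
    (hf : ∀ s ∈ Set.Ici (0:ℝ), HasDerivWithinAt f (f' s) (Set.Ici 0) s)
    (hf' : ∀ s ∈ Set.Ioi (0:ℝ), 0 ≤ f' s) : MonotoneOn f (Set.Ici 0) := by
  apply monotoneOn_of_hasDerivWithinAt_nonneg (convex_Ici 0)
    (fun s hs => (hf s hs).continuousWithinAt) (f' := f')
  · intro x hx
    rw [interior_Ici] at hx
    exact ((hf x (Set.mem_Ici.2 (le_of_lt hx))).mono (by rw [interior_Ici]; exact Set.Ioi_subset_Ici_self))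
  · intro x hx
    rw [interior_Ici] at hx
    exact hf' x hx

/-- a function with derivative dominated by a decaying exponential converges at infinity. -/
lemma tendsto_of_deriv_exp_bound {f f' : ℝ → ℝ} {c lam : ℝ} (hlam : 0 < lam) (hc : 0 ≤ c)
    (hf : ∀ s ∈ Set.Ici (0:ℝ), HasDerivWithinAt f (f' s) (Set.Ici 0) s)
    (hb : ∀ s ∈ Set.Ici (0:ℝ), |f' s| ≤ c * Real.exp (-lam * s)) :
    ∃ L, Filter.Tendsto f Filter.atTop (nhds L) := by
  set g : ℝ → ℝ := fun s => (c / lam) * Real.exp (-lam * s) with hg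
  have hgderiv : ∀ s : ℝ, HasDerivAt g (-(c * Real.exp (-lam * s))) s := by
    intro s
    have h1 : HasDerivAt (fun s : ℝ => -lam * s) (-lam) s := by
      simpa using (hasDerivAt_id s).const_mul (-lam)
    have h2 := (h1.exp).const_mul (c / lam)
    convert h2 using 1
    · rfl
    · rfl
    field_simp
  have hφ : AntitoneOn (fun s => f s + g s) (Set.Ici 0) := by
    apply antitoneOn_Ici (f' := fun s => f' s + -(c * Real.exp (-lam * s)))
    · exact fun s hs => (hf s hs).add ((hgderiv s).hasDerivWithinAt)
    · intro s hs
      have := abs_le.1 (hb s (Set.mem_Ici.2 (le_of_lt hs)))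
      linarith [this.2]
  have hψ : MonotoneOn (fun s => f s - g s) (Set.Ici 0) := by
    apply monotoneOn_Ici (f' := fun s => f' s - -(c * Real.exp (-lam * s)))
    · exact fun s hs => (hf s hs).sub ((hgderiv s).hasDerivWithinAt)
    · intro s hs
      have := abs_le.1 (hb s (Set.mem_Ici.2 (le_of_lt hs)))
      linarith [this.1]
  have hbdd : ∀ s ∈ Set.Ici (0:ℝ), f 0 - g 0 ≤ f s + g s := by
    intro s hs
    have h1 : f 0 - g 0 ≤ f s - g s := hψ (Set.self_mem_Ici) hs hs
    have h2 : 0 ≤ g s := mul_nonneg (div_nonneg hc hlam.le) (Real.exp_pos _).le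
    linarith
  set φm : ℝ → ℝ := fun s => f (max s 0) + g (max s 0) with hφm
  have hanti : Antitone φm := fun s t hst =>
    hφ (le_max_right s 0) (le_max_right t 0) (max_le_max hst le_rfl)
  have hbdd2 : BddBelow (Set.range φm) := by
    refine ⟨f 0 - g 0, ?_⟩
    rintro x ⟨s, rfl⟩
    exact hbdd _ (le_max_right s 0)
  have hconv := tendsto_atTop_ciInf hanti hbdd2
  refine ⟨(⨅ i, φm i) - 0, ?_⟩
  have hgz : Filter.Tendsto g Filter.atTop (nhds 0) := by
    have h1 : Filter.Tendsto (fun s : ℝ => Real.exp (-lam * s)) Filter.atTop (nhds 0) := by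
      have h2 := Real.tendsto_exp_neg_atTop_nhds_zero.comp
        (Filter.Tendsto.const_mul_atTop hlam Filter.tendsto_id)
      have heq : ((fun x => Real.exp (-x)) ∘ fun x => lam * id x)
          = fun s : ℝ => Real.exp (-lam * s) := by
        funext s; simp [Function.comp, neg_mul]
      rwa [heq] at h2
    have h2 := h1.const_mul (c / lam)
    simpa [hg] using h2
  have hfeq : f =ᶠ[Filter.atTop] fun s => φm s - g s := by
    filter_upwards [Filter.eventually_ge_atTop (0:ℝ)] with s hs
    simp [hφm, max_eq_left hs]
  exact Filter.Tendsto.congr' hfeq.symm (hconv.sub hgz)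

/-! ### Operator norm vs Frobenius quantity -/

lemma opNorm_le_sqrt_trace (A : MQ Q) : opNorm A ≤ Real.sqrt (Matrix.trace (Aᵀ * A)) := by
  apply ContinuousLinearMap.opNorm_le_bound _ (Real.sqrt_nonneg _)
  intro x
  have hx : ‖(LinearMap.toContinuousLinearMap (Matrix.toEuclideanLin A)) x‖
      = Real.sqrt (∑ j, ((A *ᵥ (fun k => x k)) j)^2) := by
    rw [LinearMap.coe_toContinuousLinearMap']
    rw [Matrix.toEuclideanLin_apply]
    rw [EuclideanSpace.norm_eq]
    congr 1
    apply Finset.sum_congr rfl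
    intro j _
    simp [Real.norm_eq_abs, sq_abs]
  rw [hx]
  have hxn : ‖x‖ = Real.sqrt (∑ k, (x k)^2) := by
    rw [EuclideanSpace.norm_eq]
    congr 1
    exact Finset.sum_congr rfl fun k _ => by simp [Real.norm_eq_abs, sq_abs]
  have key : ∑ j, ((A *ᵥ (fun k => x k)) j)^2 ≤ Matrix.trace (Aᵀ * A) * ∑ k, (x k)^2 := by
    rw [trace_sq_eq]
    have h1 : ∀ j, ((A *ᵥ (fun k => x k)) j)^2 ≤ (∑ k, (A j k)^2) * (∑ k, (x k)^2) := by
      intro j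
      have hmv : (A *ᵥ fun k => x k) j = ∑ k, A j k * x k := by
        simp [Matrix.mulVec, dotProduct]
      rw [hmv]
      exact Finset.sum_mul_sq_le_sq_mul_sq Finset.univ _ _
    calc ∑ j, ((A *ᵥ (fun k => x k)) j)^2 ≤ ∑ j, (∑ k, (A j k)^2) * (∑ k, (x k)^2) :=
          Finset.sum_le_sum fun j _ => h1 j
      _ = (∑ j, ∑ k, (A j k)^2) * (∑ k, (x k)^2) := (Finset.sum_mul _ _ _).symm
      _ = (∑ k, ∑ j, (A j k)^2) * (∑ k, (x k)^2) := by rw [Finset.sum_comm]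
  calc Real.sqrt (∑ j, ((A *ᵥ (fun k => x k)) j)^2)
      ≤ Real.sqrt (Matrix.trace (Aᵀ * A) * ∑ k, (x k)^2) := Real.sqrt_le_sqrt key
    _ = Real.sqrt (Matrix.trace (Aᵀ * A)) * Real.sqrt (∑ k, (x k)^2) :=
        Real.sqrt_mul (trace_sq_nonneg A) _
    _ = Real.sqrt (Matrix.trace (Aᵀ * A)) * ‖x‖ := by rw [hxn]

end SGECAux

open SGECAux Matrix Set Filter

attribute [local instance] Matrix.frobeniusSeminormedAddCommGroup
  Matrix.frobeniusNormedAddCommGroup Matrix.frobeniusNormedSpace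
  Matrix.frobeniusNormedRing Matrix.frobeniusNormedAlgebra

set_option maxHeartbeats 1000000

/-- if the integral of motion `B Bᵀ − Wᵀ W` is definite at time `0`, then the
standard cost decays exponentially, the orbits are bounded, and `W`, `B` converge with
`W_∞ B_∞ = −Y`. -/
theorem spectral_gap_exponential_convergence {Q : ℕ} (hQ : 1 ≤ Q)
    (Y : Matrix (Fin Q) (Fin Q) ℝ)
    (B W : ℝ → Matrix (Fin Q) (Fin Q) ℝ)
    (hB : ∀ s, 0 ≤ s → ∀ j k,
      HasDerivWithinAt (fun t => B t j k) ((-((W s)ᵀ * (W s * B s + Y))) j k)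
        (Set.Ici (0 : ℝ)) s)
    (hW : ∀ s, 0 ≤ s → ∀ j k,
      HasDerivWithinAt (fun t => W t j k) ((-((W s * B s + Y) * (B s)ᵀ)) j k)
        (Set.Ici (0 : ℝ)) s)
    (lam₀ : ℝ) (hlam : 0 < lam₀)
    (hgap : (B 0 * (B 0)ᵀ - (W 0)ᵀ * W 0 - lam₀ • 1).PosSemidef ∨
            ((W 0)ᵀ * W 0 - B 0 * (B 0)ᵀ - lam₀ • 1).PosSemidef) :
    -- (a) exponential decay of the cost
    (∀ s, 0 ≤ s →
      Matrix.trace ((W s * B s + Y)ᵀ * (W s * B s + Y)) ≤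
        Real.exp (-2 * lam₀ * s) * Matrix.trace ((W 0 * B 0 + Y)ᵀ * (W 0 * B 0 + Y))) ∧
    -- (b) uniform boundedness of the orbits
    (∃ C : ℝ, ∀ s, 0 ≤ s → opNorm (W s) ≤ C ∧ opNorm (B s) ≤ C) ∧
    -- (c) convergence of W and B, with W_∞ B_∞ = −Y
    (∃ Winf Binf : Matrix (Fin Q) (Fin Q) ℝ,
      (∀ j k, Filter.Tendsto (fun s => W s j k) Filter.atTop (nhds (Winf j k))) ∧
      (∀ j k, Filter.Tendsto (fun s => B s j k) Filter.atTop (nhds (Binf j k))) ∧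
      Winf * Binf = -Y) := by
  classical
  -- matrix-level derivatives
  set R : ℝ → MQ Q := fun s => W s * B s + Y with hRdef
  have hBm : ∀ s ∈ Set.Ici (0:ℝ), HasDerivWithinAt B (-((W s)ᵀ * R s)) (Set.Ici 0) s :=
    fun s hs => hasDerivWithinAt_matrix.2 (hB s hs)
  have hWm : ∀ s ∈ Set.Ici (0:ℝ), HasDerivWithinAt W (-(R s * (B s)ᵀ)) (Set.Ici 0) s :=
    fun s hs => hasDerivWithinAt_matrix.2 (hW s hs)
  set R' : ℝ → MQ Q := fun s => -(R s * ((B s)ᵀ * B s)) - W s * ((W s)ᵀ * R s) with hR'def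
  have hRm : ∀ s ∈ Set.Ici (0:ℝ), HasDerivWithinAt R (R' s) (Set.Ici 0) s := by
    intro s hs
    have h1 := ((hWm s hs).mul (hBm s hs)).add_const Y
    convert h1 using 1
    · rfl
    · rfl
    · rfl
    · rfl
    simp [hR'def, Matrix.mul_assoc, Matrix.neg_mul, Matrix.mul_neg]
    abel
  -- cost and its derivative
  set E : ℝ → ℝ := fun s => Matrix.trace ((R s)ᵀ * R s) with hEdef
  have hEd : ∀ s ∈ Set.Ici (0:ℝ),
      HasDerivWithinAt E (2 * Matrix.trace ((R s)ᵀ * R' s)) (Set.Ici 0) s :=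
    fun s hs => hd_trace_sq (hRm s hs)
  have hEnn : ∀ s, 0 ≤ E s := fun s => trace_sq_nonneg (R s)
  -- the invariant
  set D0 : MQ Q := B 0 * (B 0)ᵀ - (W 0)ᵀ * W 0 with hD0def
  have hDd : ∀ s ∈ Set.Ici (0:ℝ),
      HasDerivWithinAt (fun t => B t * (B t)ᵀ - (W t)ᵀ * W t) 0 (Set.Ici 0) s := by
    intro s hs
    have h1 := (hBm s hs).mul (hd_mtrans (hBm s hs))
    have h2 := (hd_mtrans (hWm s hs)).mul (hWm s hs)
    have h3 := h1.sub h2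
    convert h3 using 1
    · rfl
    · rfl
    · rfl
    · rfl
    simp only [Matrix.transpose_neg, Matrix.transpose_mul, Matrix.transpose_transpose,
      Matrix.neg_mul, Matrix.mul_neg, Matrix.mul_assoc]
    abel
  have hDconst : ∀ s ∈ Set.Ici (0:ℝ), B s * (B s)ᵀ - (W s)ᵀ * W s = D0 := by
    intro s hs
    have hcont : ContinuousOn (fun t => B t * (B t)ᵀ - (W t)ᵀ * W t) (Set.Icc 0 s) :=
      fun t ht => ((hDd t ht.1).continuousWithinAt).mono Set.Icc_subset_Ici_self
    have hderiv : ∀ x ∈ Set.Ico (0:ℝ) s,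
        HasDerivWithinAt (fun t => B t * (B t)ᵀ - (W t)ᵀ * W t) 0 (Set.Ici x) x :=
      fun x hx => (hDd x hx.1).mono (Set.Ici_subset_Ici.2 hx.1)
    exact constant_of_has_deriv_right_zero hcont hderiv s ⟨hs, le_refl s⟩
  -- positivity of B Bᵀ (case 1) resp. W Wᵀ (case 2) along the flow
  have hBBgap : ∀ s ∈ Set.Ici (0:ℝ), (D0 - lam₀ • 1).PosSemidef →
      ((B s)ᵀ * B s - lam₀ • 1).PosSemidef := by
    intro s hs hcase
    apply psd_swap hlam
    have h1 : B s * (B s)ᵀ - lam₀ • 1 = (D0 - lam₀ • 1) + (W s)ᵀ * W s := by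
      rw [← hDconst s hs]; abel
    rw [h1]
    exact hcase.add (transpose_mul_self_posSemidef (W s))
  have hWWgap : ∀ s ∈ Set.Ici (0:ℝ), (-D0 - lam₀ • 1).PosSemidef →
      (W s * (W s)ᵀ - lam₀ • 1).PosSemidef := by
    intro s hs hcase
    have h0 : ((W s)ᵀ * ((W s)ᵀ)ᵀ - lam₀ • 1).PosSemidef := by
      rw [Matrix.transpose_transpose]
      have h1 : (W s)ᵀ * W s - lam₀ • 1 = (-D0 - lam₀ • 1) + B s * (B s)ᵀ := by
        rw [← hDconst s hs]; abel
      rw [h1]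
      have h2 : (B s * (B s)ᵀ).PosSemidef := by
        have := transpose_mul_self_posSemidef (B s)ᵀ
        rwa [Matrix.transpose_transpose] at this
      exact hcase.add h2
    have := psd_swap hlam h0
    rwa [Matrix.transpose_transpose] at this
  -- the differential inequality for E
  have hEineq : ∀ s ∈ Set.Ici (0:ℝ),
      2 * Matrix.trace ((R s)ᵀ * R' s) ≤ -2 * lam₀ * E s := by
    intro s hs
    have ht1t2 : Matrix.trace ((R s)ᵀ * R' s)
        = -(Matrix.trace (((R s)ᵀ * R s) * ((B s)ᵀ * B s))
            + Matrix.trace ((R s * (R s)ᵀ) * (W s * (W s)ᵀ))) := by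
      rw [hR'def]
      simp only [Matrix.mul_sub, Matrix.mul_neg, Matrix.trace_sub, Matrix.trace_neg]
      rw [show (R s)ᵀ * (R s * ((B s)ᵀ * B s)) = ((R s)ᵀ * R s) * ((B s)ᵀ * B s) from by
        simp [Matrix.mul_assoc]]
      rw [show (R s)ᵀ * (W s * ((W s)ᵀ * R s)) = ((R s)ᵀ * (W s * (W s)ᵀ)) * R s from by
        simp [Matrix.mul_assoc]]
      rw [Matrix.trace_mul_comm ((R s)ᵀ * (W s * (W s)ᵀ)) (R s)]
      rw [show R s * ((R s)ᵀ * (W s * (W s)ᵀ)) = (R s * (R s)ᵀ) * (W s * (W s)ᵀ) from by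
        simp [Matrix.mul_assoc]]
      ring
    have hRRpsd : ((R s)ᵀ * R s).PosSemidef := transpose_mul_self_posSemidef (R s)
    have hRRpsd' : (R s * (R s)ᵀ).PosSemidef := by
      have := transpose_mul_self_posSemidef (R s)ᵀ
      rwa [Matrix.transpose_transpose] at this
    have hBBpsd : ((B s)ᵀ * B s).PosSemidef := transpose_mul_self_posSemidef (B s)
    have hWWpsd : (W s * (W s)ᵀ).PosSemidef := by
      have := transpose_mul_self_posSemidef (W s)ᵀ
      rwa [Matrix.transpose_transpose] at this
    have hsplit : ∀ (P X : MQ Q), (X - lam₀ • 1).PosSemidef →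
        Matrix.trace (Pᵀ * P) = E s →
        lam₀ * E s ≤ Matrix.trace ((Pᵀ * P) * X) := by
      intro P X hX htr
      have h1 : (Pᵀ * P) * X = (Pᵀ * P) * (X - lam₀ • 1) + lam₀ • (Pᵀ * P) := by
        rw [Matrix.mul_sub]
        rw [Matrix.mul_smul, Matrix.mul_one]
        abel
      rw [h1, Matrix.trace_add, Matrix.trace_smul]
      have h2 : 0 ≤ Matrix.trace ((Pᵀ * P) * (X - lam₀ • 1)) :=
        trace_psd_mul_nonneg (transpose_mul_self_posSemidef P) hX
      rw [htr]
      simpa using h2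
    rcases hgap with hcase | hcase
    · -- B Bᵀ dominates
      have hkey := hsplit (R s) ((B s)ᵀ * B s) (hBBgap s hs (by rwa [hD0def])) rfl
      have h2 : 0 ≤ Matrix.trace ((R s * (R s)ᵀ) * (W s * (W s)ᵀ)) :=
        trace_psd_mul_nonneg hRRpsd' hWWpsd
      rw [ht1t2]
      linarith [hkey]
    · -- Wᵀ W dominates
      have hcase' : (-D0 - lam₀ • 1).PosSemidef := by
        have : -D0 = (W 0)ᵀ * W 0 - B 0 * (B 0)ᵀ := by rw [hD0def]; abel
        rwa [this]
      have htrR : Matrix.trace ((R s)ᵀᵀ * (R s)ᵀ) = E s := by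
        rw [Matrix.transpose_transpose, Matrix.trace_mul_comm]
      have hkey := hsplit ((R s)ᵀ) (W s * (W s)ᵀ) (hWWgap s hs hcase') htrR
      rw [Matrix.transpose_transpose] at hkey
      have h2 : 0 ≤ Matrix.trace (((R s)ᵀ * R s) * ((B s)ᵀ * B s)) :=
        trace_psd_mul_nonneg hRRpsd hBBpsd
      rw [ht1t2]
      linarith [hkey]
  -- (a) : Gronwall
  have hgmono : ∀ s ∈ Set.Ici (0:ℝ), E s ≤ Real.exp (-2 * lam₀ * s) * E 0 := by
    set g : ℝ → ℝ := fun s => Real.exp (2 * lam₀ * s) * E s with hgdef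
    have hgd : ∀ s ∈ Set.Ici (0:ℝ), HasDerivWithinAt g
        (Real.exp (2 * lam₀ * s) * (2 * lam₀) * E s
          + Real.exp (2 * lam₀ * s) * (2 * Matrix.trace ((R s)ᵀ * R' s))) (Set.Ici 0) s := by
      intro s hs
      have h1 : HasDerivAt (fun t : ℝ => 2 * lam₀ * t) (2 * lam₀) s := by
        simpa using (hasDerivAt_id s).const_mul (2 * lam₀)
      exact (h1.exp.hasDerivWithinAt).mul (hEd s hs)
    have hanti : AntitoneOn g (Set.Ici 0) := by
      apply antitoneOn_Ici (f' := fun s => Real.exp (2 * lam₀ * s) * (2 * lam₀) * E s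
        + Real.exp (2 * lam₀ * s) * (2 * Matrix.trace ((R s)ᵀ * R' s))) hgd
      intro s hs
      have h1 := hEineq s (Set.mem_Ici.2 (le_of_lt hs))
      have h2 := (Real.exp_pos (2 * lam₀ * s)).le
      nlinarith [mul_le_mul_of_nonneg_left h1 h2]
    intro s hs
    have h1 : g s ≤ g 0 := hanti Set.self_mem_Ici hs hs
    have h2 : g 0 = E 0 := by rw [hgdef]; simp
    have h4 : Real.exp (-2 * lam₀ * s) * Real.exp (2 * lam₀ * s) = 1 := by
      rw [← Real.exp_add, show -2 * lam₀ * s + 2 * lam₀ * s = 0 from by ring, Real.exp_zero]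
    have h5 : E s = Real.exp (-2 * lam₀ * s) * g s := by
      rw [hgdef]; dsimp only; rw [← mul_assoc, h4, one_mul]
    rw [h5]
    exact mul_le_mul_of_nonneg_left (h2 ▸ h1) (Real.exp_pos _).le
  -- square-root form of the decay
  set K : ℝ := Real.sqrt (E 0) with hKdef
  have hK0 : 0 ≤ K := Real.sqrt_nonneg _
  have hsqrtE : ∀ s ∈ Set.Ici (0:ℝ), Real.sqrt (E s) ≤ K * Real.exp (-lam₀ * s) := by
    intro s hs
    have h1 := hgmono s hs
    have h2 : Real.exp (-2 * lam₀ * s) = (Real.exp (-lam₀ * s))^2 := by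
      rw [sq, ← Real.exp_add]; congr 1; ring
    calc Real.sqrt (E s) ≤ Real.sqrt (Real.exp (-2 * lam₀ * s) * E 0) := Real.sqrt_le_sqrt h1
      _ = Real.exp (-lam₀ * s) * K := by
          rw [h2, Real.sqrt_mul (sq_nonneg _), Real.sqrt_sq (Real.exp_pos _).le, hKdef]
      _ = K * Real.exp (-lam₀ * s) := mul_comm _ _
  have hEb : ∀ s ∈ Set.Ici (0:ℝ), E s ≤ (K * Real.exp (-lam₀ * s))^2 := by
    intro s hs
    have h := hsqrtE s hs
    have h2 := Real.sqrt_nonneg (E s)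
    nlinarith [Real.sq_sqrt (hEnn s)]
  -- boundedness of the orbit
  set u : ℝ → ℝ := fun s => Matrix.trace ((B s)ᵀ * B s) + Matrix.trace ((W s)ᵀ * W s) with hudef
  have hunn : ∀ s, 0 ≤ u s := fun s => add_nonneg (trace_sq_nonneg _) (trace_sq_nonneg _)
  have hud : ∀ s ∈ Set.Ici (0:ℝ), HasDerivWithinAt u
      (2 * Matrix.trace ((B s)ᵀ * (-((W s)ᵀ * R s)))
        + 2 * Matrix.trace ((W s)ᵀ * (-(R s * (B s)ᵀ)))) (Set.Ici 0) s :=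
    fun s hs => (hd_trace_sq (hBm s hs)).add (hd_trace_sq (hWm s hs))
  have htrBB : ∀ s : ℝ, Matrix.trace (((B s)ᵀ)ᵀ * (B s)ᵀ) = Matrix.trace ((B s)ᵀ * B s) :=
    fun s => by rw [Matrix.transpose_transpose, Matrix.trace_mul_comm]
  have htrWW : ∀ s : ℝ, Matrix.trace (((W s)ᵀ)ᵀ * (W s)ᵀ) = Matrix.trace ((W s)ᵀ * W s) :=
    fun s => by rw [Matrix.transpose_transpose, Matrix.trace_mul_comm]
  have hud_bound : ∀ s ∈ Set.Ici (0:ℝ),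
      2 * Matrix.trace ((B s)ᵀ * (-((W s)ᵀ * R s)))
        + 2 * Matrix.trace ((W s)ᵀ * (-(R s * (B s)ᵀ)))
      ≤ 2 * (K * Real.exp (-lam₀ * s)) * u s := by
    intro s hs
    have hc1 : Matrix.trace ((B s)ᵀ * (-((W s)ᵀ * R s)))
        = -Matrix.trace ((W s)ᵀ * (R s * (B s)ᵀ)) := by
      rw [Matrix.mul_neg, Matrix.trace_neg]
      congr 1
      rw [Matrix.trace_mul_comm ((B s)ᵀ) ((W s)ᵀ * R s)]
      simp [Matrix.mul_assoc]
    have hc2' : Matrix.trace ((W s)ᵀ * (-(R s * (B s)ᵀ)))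
        = -Matrix.trace ((W s)ᵀ * (R s * (B s)ᵀ)) := by
      rw [Matrix.mul_neg, Matrix.trace_neg]
    -- Cauchy-Schwarz bound for the cross term
    have hCS := trace_CS (W s) (R s * (B s)ᵀ)
    have hsub := trace_mul_sq_le (R s) ((B s)ᵀ)
    rw [htrBB s] at hsub
    set a : ℝ := Matrix.trace ((W s)ᵀ * W s) with hadef
    set b : ℝ := Matrix.trace ((B s)ᵀ * B s) with hbdef
    have ha0 : 0 ≤ a := trace_sq_nonneg _
    have hb0 : 0 ≤ b := trace_sq_nonneg _
    have hcross : |Matrix.trace ((W s)ᵀ * (R s * (B s)ᵀ))| ≤ Real.sqrt (E s) * (a + b) / 2 := by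
      have h1 : (Matrix.trace ((W s)ᵀ * (R s * (B s)ᵀ)))^2 ≤ a * (E s * b) :=
        le_trans hCS (by
          have := mul_le_mul_of_nonneg_left hsub ha0
          linarith)
      have h2 : |Matrix.trace ((W s)ᵀ * (R s * (B s)ᵀ))|
          = Real.sqrt ((Matrix.trace ((W s)ᵀ * (R s * (B s)ᵀ)))^2) := (Real.sqrt_sq_eq_abs _).symm
      rw [h2]
      calc Real.sqrt ((Matrix.trace ((W s)ᵀ * (R s * (B s)ᵀ)))^2)
          ≤ Real.sqrt (E s * (a * b)) := Real.sqrt_le_sqrt (by nlinarith)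
        _ = Real.sqrt (E s) * Real.sqrt (a * b) := Real.sqrt_mul (hEnn s) _
        _ ≤ Real.sqrt (E s) * ((a + b) / 2) := by
            apply mul_le_mul_of_nonneg_left _ (Real.sqrt_nonneg _)
            rw [Real.sqrt_mul ha0]
            nlinarith [sq_nonneg (Real.sqrt a - Real.sqrt b), Real.sq_sqrt ha0,
              Real.sq_sqrt hb0, Real.sqrt_nonneg a, Real.sqrt_nonneg b]
        _ = Real.sqrt (E s) * (a + b) / 2 := by ring
    have habs := abs_le.1 hcross
    have hEK := hsqrtE s hs
    have hu : u s = b + a := by rw [hudef]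
    have hsE0 : 0 ≤ Real.sqrt (E s) := Real.sqrt_nonneg _
    rw [hc1, hc2', hu]
    nlinarith [mul_le_mul_of_nonneg_right hEK (by linarith : (0:ℝ) ≤ a + b)]
  -- integrating factor
  have hCunn0 : (0:ℝ) ≤ u 0 := hunn 0
  set F : ℝ → ℝ := fun s => Real.exp ((2 * K / lam₀) * Real.exp (-lam₀ * s)) with hFdef
  have hFd : ∀ s : ℝ, HasDerivAt F
      (F s * ((2 * K / lam₀) * (Real.exp (-lam₀ * s) * -lam₀))) s := by
    intro s
    have h1 : HasDerivAt (fun t : ℝ => -lam₀ * t) (-lam₀) s := by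
      simpa using (hasDerivAt_id s).const_mul (-lam₀)
    exact ((h1.exp).const_mul (2 * K / lam₀)).exp
  have hFpos : ∀ s, 0 < F s := fun s => Real.exp_pos _
  have hF1 : ∀ s, 1 ≤ F s := by
    intro s
    rw [hFdef]
    dsimp only
    rw [show (1:ℝ) = Real.exp 0 from (Real.exp_zero).symm]
    apply Real.exp_le_exp.2
    exact mul_nonneg (div_nonneg (by linarith) hlam.le) (Real.exp_pos _).le
  have hvanti : AntitoneOn (fun s => u s * F s) (Set.Ici 0) := by
    apply antitoneOn_Ici (f' := fun s =>
      (2 * Matrix.trace ((B s)ᵀ * (-((W s)ᵀ * R s)))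
        + 2 * Matrix.trace ((W s)ᵀ * (-(R s * (B s)ᵀ)))) * F s
      + u s * (F s * ((2 * K / lam₀) * (Real.exp (-lam₀ * s) * -lam₀))))
    · exact fun s hs => (hud s hs).mul ((hFd s).hasDerivWithinAt)
    · intro s hs
      have h1 := hud_bound s (Set.mem_Ici.2 (le_of_lt hs))
      have h2 : (2 * K / lam₀) * (Real.exp (-lam₀ * s) * -lam₀)
          = -(2 * K * Real.exp (-lam₀ * s)) := by
        field_simp
      rw [h2]
      have h3 := hFpos s
      have h4 := hunn s
      nlinarith [mul_le_mul_of_nonneg_right h1 h3.le]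
  set Cu : ℝ := u 0 * Real.exp (2 * K / lam₀) with hCudef
  have hCunn : 0 ≤ Cu := mul_nonneg hCunn0 (Real.exp_pos _).le
  have hubdd : ∀ s ∈ Set.Ici (0:ℝ), u s ≤ Cu := by
    intro s hs
    have h1 : u s * F s ≤ u 0 * F 0 := hvanti Set.self_mem_Ici hs hs
    have h2 : F 0 = Real.exp (2 * K / lam₀) := by rw [hFdef]; simp
    have h3 : u s ≤ u s * F s := le_mul_of_one_le_right (hunn s) (hF1 s)
    rw [h2] at h1
    rw [hCudef]
    exact h3.trans h1
  have htrBle : ∀ s ∈ Set.Ici (0:ℝ), Matrix.trace ((B s)ᵀ * B s) ≤ Cu := by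
    intro s hs
    have h1 := hubdd s hs
    have h2 : u s = Matrix.trace ((B s)ᵀ * B s) + Matrix.trace ((W s)ᵀ * W s) := rfl
    linarith [trace_sq_nonneg (W s)]
  have htrWle : ∀ s ∈ Set.Ici (0:ℝ), Matrix.trace ((W s)ᵀ * W s) ≤ Cu := by
    intro s hs
    have h1 := hubdd s hs
    have h2 : u s = Matrix.trace ((B s)ᵀ * B s) + Matrix.trace ((W s)ᵀ * W s) := rfl
    linarith [trace_sq_nonneg (B s)]
  -- convenient absolute-value helper
  have habs : ∀ (x y : ℝ), 0 ≤ y → x^2 ≤ y^2 → |x| ≤ y := by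
    intro x y hy h
    have h1 := Real.sqrt_le_sqrt h
    rwa [Real.sqrt_sq_eq_abs, Real.sqrt_sq hy] at h1
  refine ⟨fun s hs => hgmono s hs, ?_, ?_⟩
  · -- (b)
    refine ⟨Real.sqrt Cu, fun s hs => ⟨?_, ?_⟩⟩
    · calc opNorm (W s) ≤ Real.sqrt (Matrix.trace ((W s)ᵀ * W s)) := opNorm_le_sqrt_trace _
        _ ≤ Real.sqrt Cu := Real.sqrt_le_sqrt (htrWle s hs)
    · calc opNorm (B s) ≤ Real.sqrt (Matrix.trace ((B s)ᵀ * B s)) := opNorm_le_sqrt_trace _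
        _ ≤ Real.sqrt Cu := Real.sqrt_le_sqrt (htrBle s hs)
  · -- (c)
    set c0 : ℝ := K * Real.sqrt Cu with hc0def
    have hc0nn : 0 ≤ c0 := mul_nonneg hK0 (Real.sqrt_nonneg _)
    have hc0sq : ∀ s : ℝ, (c0 * Real.exp (-lam₀ * s))^2
        = (K * Real.exp (-lam₀ * s))^2 * Cu := by
      intro s
      rw [hc0def, mul_pow, mul_pow, Real.sq_sqrt hCunn]
      ring
    have hWlim : ∀ j k, ∃ L, Filter.Tendsto (fun s => W s j k) Filter.atTop (nhds L) := by
      intro j k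
      apply tendsto_of_deriv_exp_bound hlam hc0nn
        (f' := fun s => (-(R s * (B s)ᵀ)) j k)
      · exact fun s hs => hW s hs j k
      · intro s hs
        have h1 := entry_sq_le_trace (-(R s * (B s)ᵀ)) j k
        have h2 : Matrix.trace ((-(R s * (B s)ᵀ))ᵀ * (-(R s * (B s)ᵀ)))
            = Matrix.trace ((R s * (B s)ᵀ)ᵀ * (R s * (B s)ᵀ)) := by
          simp
        have h3 := trace_mul_sq_le (R s) ((B s)ᵀ)
        rw [htrBB s] at h3
        apply habs _ _ (mul_nonneg hc0nn (Real.exp_pos _).le)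
        rw [hc0sq s]
        have h5 := hEb s hs
        have h6 := htrBle s hs
        have h7 := trace_sq_nonneg (B s)
        have h8 := hEnn s
        nlinarith [sq_nonneg (K * Real.exp (-lam₀ * s))]
    have hBlim : ∀ j k, ∃ L, Filter.Tendsto (fun s => B s j k) Filter.atTop (nhds L) := by
      intro j k
      apply tendsto_of_deriv_exp_bound hlam hc0nn
        (f' := fun s => (-((W s)ᵀ * R s)) j k)
      · exact fun s hs => hB s hs j k
      · intro s hs
        have h1 := entry_sq_le_trace (-((W s)ᵀ * R s)) j k
        have h2 : Matrix.trace ((-((W s)ᵀ * R s))ᵀ * (-((W s)ᵀ * R s)))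
            = Matrix.trace (((W s)ᵀ * R s)ᵀ * ((W s)ᵀ * R s)) := by
          simp
        have h3 := trace_mul_sq_le ((W s)ᵀ) (R s)
        rw [htrWW s] at h3
        apply habs _ _ (mul_nonneg hc0nn (Real.exp_pos _).le)
        rw [hc0sq s]
        have h5 := hEb s hs
        have h6 := htrWle s hs
        have h7 := trace_sq_nonneg (W s)
        have h8 := hEnn s
        nlinarith [sq_nonneg (K * Real.exp (-lam₀ * s))]
    choose Winf hWinf using hWlim
    choose Binf hBinf using hBlim
    refine ⟨Matrix.of Winf, Matrix.of Binf, fun j k => hWinf j k, fun j k => hBinf j k, ?_⟩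
    have hexp0 : Filter.Tendsto (fun s : ℝ => Real.exp (-lam₀ * s)) Filter.atTop (nhds 0) := by
      have h2 := Real.tendsto_exp_neg_atTop_nhds_zero.comp
        (Filter.Tendsto.const_mul_atTop hlam Filter.tendsto_id)
      have heq : ((fun x => Real.exp (-x)) ∘ fun x => lam₀ * id x)
          = fun s : ℝ => Real.exp (-lam₀ * s) := by
        funext s; simp [Function.comp, neg_mul]
      rwa [heq] at h2
    have hRzero : ∀ j k, Filter.Tendsto (fun s => R s j k) Filter.atTop (nhds 0) := by
      intro j k
      apply squeeze_zero_norm' (a := fun s => K * Real.exp (-lam₀ * s))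
      · filter_upwards [Filter.eventually_ge_atTop (0:ℝ)] with s hs
        rw [Real.norm_eq_abs]
        apply habs _ _ (mul_nonneg hK0 (Real.exp_pos _).le)
        have h1 := entry_sq_le_trace (R s) j k
        have h2 := hEb s hs
        linarith
      · simpa using hexp0.const_mul K
    have hRlim : ∀ j k, Filter.Tendsto (fun s => R s j k) Filter.atTop
        (nhds (((Matrix.of Winf) * (Matrix.of Binf)) j k + Y j k)) := by
      intro j k
      have h1 : ∀ s, R s j k = (∑ l, W s j l * B s l k) + Y j k := by
        intro s; rw [hRdef]; simp [Matrix.mul_apply, Matrix.add_apply]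
      have h2 : Filter.Tendsto (fun s => (∑ l, W s j l * B s l k) + Y j k) Filter.atTop
          (nhds ((∑ l, Winf j l * Binf l k) + Y j k)) :=
        (tendsto_finset_sum _ (fun l _ => (hWinf j l).mul (hBinf l k))).add tendsto_const_nhds
      have h3 : ((Matrix.of Winf) * (Matrix.of Binf)) j k = ∑ l, Winf j l * Binf l k := by
        simp [Matrix.mul_apply]
      rw [h3]
      exact Filter.Tendsto.congr (fun s => (h1 s).symm) h2
    apply Matrix.ext
    intro j k
    have h0 := tendsto_nhds_unique (hRlim j k) (hRzero j k)
    have : ((Matrix.of Winf) * (Matrix.of Binf)) j k = -(Y j k) := by linarith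
    simpa [Matrix.neg_apply] using this

end
end
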